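/- arXiv:2409.02289 — 2 statements merged into one kernel-verified Lean document; each statement's English description precedes it below -/
import Mathlib

section
/- For any consistent LE-ALC ABox A, the canonical model M constructed from the tableaux completion Ā is a model of A whose size is polynomial in the size of A; moreover, for any individual names b, y and any concept C occurring in A: b is in the extent of C^M if and only if b I x_C ∈ Ā, and y is in the intent of C^M if and only if a_C I y ∈ Ā. -/
/-!
Common formal infrastructure for the description logic LE-ALC:
syntax of concepts, individual names, ABox terms, the tableaux expansion
rules and completion, and the polarity-based (enriched formal context)
semantics.
-/

namespace LEALC

/-- LE-ALC concepts: `C ::= D | C₁ ∧ C₂ | C₁ ∨ C₂ | [R_□]C | ⟨R_◇⟩C`. -/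
inductive Cpt : Type
  | atom : ℕ → Cpt
  | meet : Cpt → Cpt → Cpt
  | join : Cpt → Cpt → Cpt
  | box  : Cpt → Cpt
  | dia  : Cpt → Cpt
  deriving DecidableEq

/-- Object individual names: ordinary names from `OBJ`, classifying objects
`a_C`, and the prefixed names `◇b`, `◆b` generated by the tableaux. -/
inductive ObName : Type
  | base : ℕ → ObName
  | cls  : Cpt → ObName
  | dia  : ObName → ObName
  | bdia : ObName → ObName
  deriving DecidableEq

/-- Feature individual names: ordinary names from `FEAT`, classifying features
`x_C`, and the prefixed names `□y`, `■y` generated by the tableaux. -/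
inductive FtName : Type
  | base : ℕ → FtName
  | cls  : Cpt → FtName
  | box  : FtName → FtName
  | bbox : FtName → FtName
  deriving DecidableEq

/-- `◇b`, with the identification `◇a_C = a_{◇C}`. -/
def ObName.diaS : ObName → ObName
  | .cls C => .cls (.dia C)
  | b => .dia b

/-- `□y`, with the identification `□x_C = x_{□C}`. -/
def FtName.boxS : FtName → FtName
  | .cls C => .cls (.box C)
  | y => .box y

/-- Positive (unnegated) ABox terms:
`a I x`, `a R_□ x`, `x R_◇ a`, `a : C`, `x :: C`. -/
inductive PTerm : Type
  | rI   : ObName → FtName → PTerm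
  | rbox : ObName → FtName → PTerm
  | rdia : FtName → ObName → PTerm
  | mem  : ObName → Cpt → PTerm
  | fmem : FtName → Cpt → PTerm
  deriving DecidableEq

/-- ABox terms: a positive term or its negation. -/
inductive Term : Type
  | pos : PTerm → Term
  | neg : PTerm → Term
  deriving DecidableEq

/-- The relational terms are `a I x`, `a R_□ x` and `x R_◇ a`. -/
def PTerm.IsRelational : PTerm → Prop
  | .rI _ _ => True
  | .rbox _ _ => True
  | .rdia _ _ => True
  | .mem _ _ => False
  | .fmem _ _ => False

/-- Subformulas (subconcepts) of a concept. -/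
def Cpt.subs : Cpt → Finset Cpt
  | .atom n => {Cpt.atom n}
  | .meet C₁ C₂ => insert (Cpt.meet C₁ C₂) (C₁.subs ∪ C₂.subs)
  | .join C₁ C₂ => insert (Cpt.join C₁ C₂) (C₁.subs ∪ C₂.subs)
  | .box C => insert (Cpt.box C) C.subs
  | .dia C => insert (Cpt.dia C) C.subs

/-- The concepts occurring in a term (subformulas of the concept of a
(possibly negated) membership assertion). -/
def Term.cpts : Term → Finset Cpt
  | .pos (.mem _ C) => C.subs
  | .pos (.fmem _ C) => C.subs
  | .neg (.mem _ C) => C.subs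
  | .neg (.fmem _ C) => C.subs
  | _ => ∅

/-- The concept `C` occurs in the set of terms `A`. -/
def Occurs (C : Cpt) (A : Set Term) : Prop := ∃ t ∈ A, C ∈ t.cpts

def PTerm.objs : PTerm → List ObName
  | .rI b _ => [b]
  | .rbox b _ => [b]
  | .rdia _ b => [b]
  | .mem b _ => [b]
  | .fmem _ _ => []

def PTerm.feats : PTerm → List FtName
  | .rI _ y => [y]
  | .rbox _ y => [y]
  | .rdia y _ => [y]
  | .mem _ _ => []
  | .fmem y _ => [y]

def Term.objs : Term → List ObName
  | .pos t => t.objs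
  | .neg t => t.objs

def Term.feats : Term → List FtName
  | .pos t => t.feats
  | .neg t => t.feats

/-- The object name `b` occurs in the set of terms `S`. -/
def ObOccurs (b : ObName) (S : Set Term) : Prop := ∃ t ∈ S, b ∈ t.objs

/-- The feature name `y` occurs in the set of terms `S`. -/
def FtOccurs (y : FtName) (S : Set Term) : Prop := ∃ t ∈ S, y ∈ t.feats

def ObName.IsBase (b : ObName) : Prop := ∃ n, b = ObName.base n
def FtName.IsBase (y : FtName) : Prop := ∃ n, y = FtName.base n

/-- A term all of whose individual names are ordinary (non-generated) names. -/
def Term.Plain (t : Term) : Prop :=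
  (∀ b ∈ t.objs, b.IsBase) ∧ (∀ y ∈ t.feats, y.IsBase)

/-- An ABox is a set of terms over the ordinary individual names `OBJ`/`FEAT`
(the generated names `a_C`, `x_C`, `◇b`, `◆b`, `□y`, `■y` are fresh). -/
def ABoxWF (A : Set Term) : Prop := ∀ t ∈ A, t.Plain

def Cpt.csize : Cpt → ℕ
  | .atom _ => 1
  | .meet C₁ C₂ => C₁.csize + C₂.csize + 1
  | .join C₁ C₂ => C₁.csize + C₂.csize + 1
  | .box C => C.csize + 1
  | .dia C => C.csize + 1

def PTerm.psize : PTerm → ℕ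
  | .rI _ _ => 1
  | .rbox _ _ => 1
  | .rdia _ _ => 1
  | .mem _ C => C.csize + 1
  | .fmem _ C => C.csize + 1

def Term.tsize : Term → ℕ
  | .pos t => t.psize + 1
  | .neg t => t.psize + 2

/-- The size `|A|` of an ABox. -/
def aboxSize (A : Finset Term) : ℕ := A.sum Term.tsize

/-- Box-depth of a concept. -/
def Cpt.bd : Cpt → ℕ
  | .atom _ => 0
  | .meet C₁ C₂ => max C₁.bd C₂.bd
  | .join C₁ C₂ => max C₁.bd C₂.bd
  | .box C => C.bd + 1
  | .dia C => C.bd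

/-- Diamond-depth of a concept. -/
def Cpt.dd : Cpt → ℕ
  | .atom _ => 0
  | .meet C₁ C₂ => max C₁.dd C₂.dd
  | .join C₁ C₂ => max C₁.dd C₂.dd
  | .box C => C.dd
  | .dia C => C.dd + 1

/-- Box-depth of an object name (names in the input ABox have depth 0,
prefixing changes the depth, classifying names inherit depths from their
concept). -/
def ObName.bd : ObName → ℤ
  | .base _ => 0
  | .cls C => -(C.bd : ℤ)
  | .dia b => b.bd
  | .bdia b => b.bd + 1

/-- Diamond-depth of an object name. -/
def ObName.dd : ObName → ℤ
  | .base _ => 0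
  | .cls C => -(C.dd : ℤ)
  | .dia b => b.dd + 1
  | .bdia b => b.dd

/-- Box-depth of a feature name. -/
def FtName.bd : FtName → ℤ
  | .base _ => 0
  | .cls C => -(C.bd : ℤ)
  | .box y => y.bd + 1
  | .bbox y => y.bd

/-- Diamond-depth of a feature name. -/
def FtName.dd : FtName → ℤ
  | .base _ => 0
  | .cls C => -(C.dd : ℤ)
  | .box y => y.dd
  | .bbox y => y.dd + 1

/-- All concepts occurring in an ABox. -/
def aboxCpts (A : Finset Term) : Finset Cpt := A.biUnion Term.cpts

/-- `□_D(A)`: maximal box-depth of a concept occurring in `A`. -/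
def aboxBd (A : Finset Term) : ℕ := (aboxCpts A).sup Cpt.bd

/-- `◇_D(A)`: maximal diamond-depth of a concept occurring in `A`. -/
def aboxDd (A : Finset Term) : ℕ := (aboxCpts A).sup Cpt.dd

/-- One-step derivability: `Deriv E A S t` holds iff the term `t` can be
added by applying one of the LE-ALC tableaux expansion rules (or the extra
rule `E`) to the current set of terms `S`, `A` being the input ABox (used
for the side conditions of the creation and inverse rules). -/
inductive Deriv (E : Term → Term → Prop) (A S : Set Term) : Term → Prop
  /-- creation rule -/
  | create_a {C : Cpt} : Occurs C A → Deriv E A S (.pos (.mem (.cls C) C))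
  | create_x {C : Cpt} : Occurs C A → Deriv E A S (.pos (.fmem (.cls C) C))
  /-- basic rule -/
  | basic {b y C} : Term.pos (.mem b C) ∈ S → Term.pos (.fmem y C) ∈ S →
      Deriv E A S (.pos (.rI b y))
  /-- rules for the logical connectives -/
  | andA_l {b C₁ C₂} : Term.pos (.mem b (.meet C₁ C₂)) ∈ S → Deriv E A S (.pos (.mem b C₁))
  | andA_r {b C₁ C₂} : Term.pos (.mem b (.meet C₁ C₂)) ∈ S → Deriv E A S (.pos (.mem b C₂))
  | orX_l {y C₁ C₂} : Term.pos (.fmem y (.join C₁ C₂)) ∈ S → Deriv E A S (.pos (.fmem y C₁))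
  | orX_r {y C₁ C₂} : Term.pos (.fmem y (.join C₁ C₂)) ∈ S → Deriv E A S (.pos (.fmem y C₂))
  | boxR {b y C} : Term.pos (.mem b (.box C)) ∈ S → Term.pos (.fmem y C) ∈ S →
      Deriv E A S (.pos (.rbox b y))
  | diaR {b y C} : Term.pos (.fmem y (.dia C)) ∈ S → Term.pos (.mem b C) ∈ S →
      Deriv E A S (.pos (.rdia y b))
  /-- inverse rules for the connectives -/
  | andA_inv {b C₁ C₂} : Term.pos (.mem b C₁) ∈ S → Term.pos (.mem b C₂) ∈ S →
      Occurs (.meet C₁ C₂) A → Deriv E A S (.pos (.mem b (.meet C₁ C₂)))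
  | orX_inv {y C₁ C₂} : Term.pos (.fmem y C₁) ∈ S → Term.pos (.fmem y C₂) ∈ S →
      Occurs (.join C₁ C₂) A → Deriv E A S (.pos (.fmem y (.join C₁ C₂)))
  /-- adjunction rules -/
  | adj_box_l {b y} : Term.pos (.rbox b y) ∈ S → Deriv E A S (.pos (.rI (.bdia b) y))
  | adj_box_r {b y} : Term.pos (.rbox b y) ∈ S → Deriv E A S (.pos (.rI b (FtName.boxS y)))
  | adj_dia_l {b y} : Term.pos (.rdia y b) ∈ S → Deriv E A S (.pos (.rI (ObName.diaS b) y))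
  | adj_dia_r {b y} : Term.pos (.rdia y b) ∈ S → Deriv E A S (.pos (.rI b (.bbox y)))
  /-- I-compatibility rules -/
  | icomp_box {b y} : Term.pos (.rI b (FtName.boxS y)) ∈ S → Deriv E A S (.pos (.rbox b y))
  | icomp_bbox {b y} : Term.pos (.rI b (.bbox y)) ∈ S → Deriv E A S (.pos (.rdia y b))
  | icomp_dia {b y} : Term.pos (.rI (ObName.diaS b) y) ∈ S → Deriv E A S (.pos (.rdia y b))
  | icomp_bdia {b y} : Term.pos (.rI (.bdia b) y) ∈ S → Deriv E A S (.pos (.rbox b y))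
  /-- basic rules for negative assertions -/
  | neg_b {b C} : Term.neg (.mem b C) ∈ S → Deriv E A S (.neg (.rI b (.cls C)))
  | neg_x {y C} : Term.neg (.fmem y C) ∈ S → Deriv E A S (.neg (.rI (.cls C) y))
  /-- appending rules -/
  | app_x {b C} : Term.pos (.rI b (.cls C)) ∈ S → Deriv E A S (.pos (.mem b C))
  | app_a {y C} : Term.pos (.rI (.cls C) y) ∈ S → Deriv E A S (.pos (.fmem y C))
  /-- an additional expansion rule `E` -/
  | extra {t t'} : E t t' → t ∈ S → Deriv E A S t'

/-- `S` contains `A` and is closed under the expansion rules. -/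
def RuleClosed (E : Term → Term → Prop) (A S : Set Term) : Prop :=
  A ⊆ S ∧ ∀ t, Deriv E A S t → t ∈ S

/-- The tableaux completion `Ā` of the ABox `A` (w.r.t. the LE-ALC expansion
rules together with the extra rule `E`): the least set of terms containing
`A` and closed under the rules. -/
def Compl (E : Term → Term → Prop) (A : Set Term) : Set Term :=
  {t | ∀ S : Set Term, RuleClosed E A S → t ∈ S}

/-- No extra expansion rule: the plain LE-ALC tableaux algorithm. -/
def noExt : Term → Term → Prop := fun _ _ => False

/-- One expansion step of the tableaux algorithm: a rule is applied to the
current set `B` and adds a new term. -/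
def Step (E : Term → Term → Prop) (A B B' : Set Term) : Prop :=
  ∃ t, Deriv E A B t ∧ t ∉ B ∧ B' = insert t B

/-- A clash: some relational term occurs together with its negation. -/
def HasClash (S : Set Term) : Prop :=
  ∃ β : PTerm, β.IsRelational ∧ Term.pos β ∈ S ∧ Term.neg β ∈ S

/-- The separation rule `SA(b,d)`: from `b I x` infer `d I x`. -/
def ruleSA (b d : ObName) : Term → Term → Prop :=
  fun t t' => ∃ x : FtName, t = Term.pos (.rI b x) ∧ t' = Term.pos (.rI d x)

/-- The separation rule `SX(y,z)`: from `a I y` infer `a I z`. -/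
def ruleSX (y z : FtName) : Term → Term → Prop :=
  fun t t' => ∃ a : ObName, t = Term.pos (.rI a y) ∧ t' = Term.pos (.rI a z)

/-- The rule `SA(R_□,R_◇,b)`: from `b R_□ y` infer `y R_◇ b`. -/
def ruleSAR (b : ObName) : Term → Term → Prop :=
  fun t t' => ∃ x : FtName, t = Term.pos (.rbox b x) ∧ t' = Term.pos (.rdia x b)

/-- The rule `SX(R_◇,R_□,y)`: from `y R_◇ a` infer `a R_□ y`. -/
def ruleSXR (y : FtName) : Term → Term → Prop :=
  fun t t' => ∃ a : ObName, t = Term.pos (.rdia y a) ∧ t' = Term.pos (.rbox a y)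

/-! ## Semantics: enriched formal contexts -/

/-- `I^{(1)}[B]` -/
def gup {O F : Type} (I : O → F → Prop) (B : Set O) : Set F := {x | ∀ a ∈ B, I a x}

/-- `I^{(0)}[Y]` -/
def gdn {O F : Type} (I : O → F → Prop) (Y : Set F) : Set O := {a | ∀ x ∈ Y, I a x}

/-- Galois-stability for sets of objects. -/
def StableO {O F : Type} (I : O → F → Prop) (B : Set O) : Prop := gdn I (gup I B) = B

/-- Galois-stability for sets of features. -/
def StableF {O F : Type} (I : O → F → Prop) (Y : Set F) : Prop := gup I (gdn I Y) = Y

/-- An interpretation of LE-ALC: an enriched formal context `(Ob, Ft, I, R_□, R_◇)`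
together with interpretations of the individual names and of the atomic
concepts (an atomic concept is interpreted by the formal concept whose
extent is `vA n` and whose intent is `gup I (vA n)`). -/
structure Model where
  Ob : Type
  Ft : Type
  I : Ob → Ft → Prop
  Rb : Ob → Ft → Prop
  Rd : Ft → Ob → Prop
  oi : ObName → Ob
  fi : FtName → Ft
  vA : ℕ → Set Ob

/-- Intent of the interpretation of an atomic concept. -/
def Model.vX (M : Model) (n : ℕ) : Set M.Ft := gup M.I (M.vA n)

/-- Well-formedness of an interpretation: `R_□` and `R_◇` are `I`-compatible,
and atomic concepts are interpreted by formal concepts. -/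
def Model.Good (M : Model) : Prop :=
  (∀ x, StableO M.I {a | M.Rb a x}) ∧
  (∀ a, StableF M.I {x | M.Rb a x}) ∧
  (∀ a, StableF M.I {x | M.Rd x a}) ∧
  (∀ x, StableO M.I {a | M.Rd x a}) ∧
  (∀ n, StableO M.I (M.vA n))

/-- The interpretation `C^M = (extent, intent)` of a concept. -/
def Model.ci (M : Model) : Cpt → Set M.Ob × Set M.Ft
  | .atom n => (M.vA n, M.vX n)
  | .meet C₁ C₂ =>
      ((Model.ci M C₁).1 ∩ (Model.ci M C₂).1,
        gup M.I ((Model.ci M C₁).1 ∩ (Model.ci M C₂).1))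
  | .join C₁ C₂ =>
      (gdn M.I ((Model.ci M C₁).2 ∩ (Model.ci M C₂).2),
        (Model.ci M C₁).2 ∩ (Model.ci M C₂).2)
  | .box C =>
      (gdn M.Rb (Model.ci M C).2, gup M.I (gdn M.Rb (Model.ci M C).2))
  | .dia C =>
      (gdn M.I (gup (fun a x => M.Rd x a) (Model.ci M C).1),
        gup (fun a x => M.Rd x a) (Model.ci M C).1)

/-- Satisfaction of positive ABox terms. -/
def Model.SatP (M : Model) : PTerm → Prop
  | .rI b y => M.I (M.oi b) (M.fi y)
  | .rbox b y => M.Rb (M.oi b) (M.fi y)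
  | .rdia y b => M.Rd (M.fi y) (M.oi b)
  | .mem b C => M.oi b ∈ (Model.ci M C).1
  | .fmem y C => M.fi y ∈ (Model.ci M C).2

/-- Satisfaction of ABox terms. -/
def Model.Sat (M : Model) : Term → Prop
  | .pos t => M.SatP t
  | .neg t => ¬ M.SatP t

/-- `M` is a model of the set of terms `A`. -/
def Model.SatAll (M : Model) (A : Set Term) : Prop := ∀ t ∈ A, M.Sat t

/-- An ABox is consistent iff it has a model. -/
def Consistent (A : Set Term) : Prop := ∃ M : Model, M.Good ∧ M.SatAll A

/-- `A ⊨ t`: every model of `A` satisfies `t`. -/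
def Entails (A : Set Term) (t : Term) : Prop :=
  ∀ M : Model, M.Good → M.SatAll A → M.Sat t

/-- `A ⊨ C₁ ⊑ C₂`: in every model of `A`, `C₁^M ≤ C₂^M` in the concept lattice. -/
def EntailsSub (A : Set Term) (C₁ C₂ : Cpt) : Prop :=
  ∀ M : Model, M.Good → M.SatAll A → (Model.ci M C₁).1 ⊆ (Model.ci M C₂).1

/-! ### Semantic concept operations -/

/-- The operation `[R_□]` on (extent, intent) pairs. -/
def Model.cbox (M : Model) (c : Set M.Ob × Set M.Ft) : Set M.Ob × Set M.Ft :=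
  (gdn M.Rb c.2, gup M.I (gdn M.Rb c.2))

/-- The operation `⟨R_◇⟩` on (extent, intent) pairs. -/
def Model.cdia (M : Model) (c : Set M.Ob × Set M.Ft) : Set M.Ob × Set M.Ft :=
  (gdn M.I (gup (fun a x => M.Rd x a) c.1), gup (fun a x => M.Rd x a) c.1)

/-- The operation `◆` (left adjoint of `[R_□]`). -/
def Model.cbdia (M : Model) (c : Set M.Ob × Set M.Ft) : Set M.Ob × Set M.Ft :=
  (gdn M.I (gup M.Rb c.1), gup M.Rb c.1)

/-- The operation `■` (right adjoint of `⟨R_◇⟩`). -/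
def Model.cbbox (M : Model) (c : Set M.Ob × Set M.Ft) : Set M.Ob × Set M.Ft :=
  (gdn (fun a x => M.Rd x a) c.2, gup M.I (gdn (fun a x => M.Rd x a) c.2))

/-- The concept `𝐚 = (a^{↑↓}, a^{↑})` generated by an object. -/
def Model.genO (M : Model) (a : M.Ob) : Set M.Ob × Set M.Ft :=
  (gdn M.I (gup M.I {a}), gup M.I {a})

/-- The concept `𝐱 = (x^{↓}, x^{↓↑})` generated by a feature. -/
def Model.genF (M : Model) (x : M.Ft) : Set M.Ob × Set M.Ft :=
  (gdn M.I {x}, gup M.I (gdn M.I {x}))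

/-- The concept companion `con(b)` of an object name, interpreted in `M`. -/
def Model.conO (M : Model) : ObName → Set M.Ob × Set M.Ft
  | .base n => M.genO (M.oi (.base n))
  | .cls C => M.genO (M.oi (.cls C))
  | .dia b => M.cdia (Model.conO M b)
  | .bdia b => M.cbdia (Model.conO M b)

/-- The concept companion `con(y)` of a feature name, interpreted in `M`. -/
def Model.conF (M : Model) : FtName → Set M.Ob × Set M.Ft
  | .base n => M.genF (M.fi (.base n))
  | .cls C => M.genF (M.fi (.cls C))
  | .box y => M.cbox (Model.conF M y)
  | .bbox y => M.cbbox (Model.conF M y)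

/-! ### The canonical model built from the tableaux completion -/

/-- Classical `dite`. -/
noncomputable def cdite {α : Sort*} (p : Prop) (f : p → α) (g : ¬ p → α) : α :=
  @dite α p (Classical.dec p) f g

/-- The canonical model built from the tableaux completion `Ā` of `A`:
its objects (resp. features) are the object (resp. feature) names occurring
in `Ā` (plus a dummy point interpreting the names not occurring in `Ā`),
every name occurring in `Ā` is interpreted by itself, the relations are read
off from `Ā`, and an atomic concept `D` is interpreted by the formal concept
`(x_D^↓, a_D^↑)`. -/
noncomputable def canModel (A : Finset Term) : Model where
  Ob := Option {b : ObName // ObOccurs b (Compl noExt ↑A)}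
  Ft := Option {y : FtName // FtOccurs y (Compl noExt ↑A)}
  I := fun o x => ∃ b y, o = some b ∧ x = some y ∧
        Term.pos (.rI b.1 y.1) ∈ Compl noExt ↑A
  Rb := fun o x => ∃ b y, o = some b ∧ x = some y ∧
        Term.pos (.rbox b.1 y.1) ∈ Compl noExt ↑A
  Rd := fun x o => ∃ b y, o = some b ∧ x = some y ∧
        Term.pos (.rdia y.1 b.1) ∈ Compl noExt ↑A
  oi := fun b => cdite (ObOccurs b (Compl noExt ↑A)) (fun h => some ⟨b, h⟩) (fun _ => none)
  fi := fun y => cdite (FtOccurs y (Compl noExt ↑A)) (fun h => some ⟨y, h⟩) (fun _ => none)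
  vA := fun n => {o | ∃ b, o = some b ∧
        Term.pos (.rI b.1 (.cls (.atom n))) ∈ Compl noExt ↑A}

/-! ### ◇-leading and □-leading concepts -/

/-- ◇-leading concepts. -/
inductive DiaLeading : Cpt → Prop
  | atom (n : ℕ) : DiaLeading (.dia (.atom n))
  | dia {C : Cpt} : DiaLeading C → DiaLeading (.dia C)
  | join {C : Cpt} (C₁ : Cpt) : DiaLeading C → DiaLeading (.join C C₁)
  | meet {C₁ C₂ : Cpt} : DiaLeading C₁ → DiaLeading C₂ → DiaLeading (.meet C₁ C₂)

/-- □-leading concepts. -/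
inductive BoxLeading : Cpt → Prop
  | atom (n : ℕ) : BoxLeading (.box (.atom n))
  | box {C : Cpt} : BoxLeading C → BoxLeading (.box C)
  | meet {C : Cpt} (C₁ : Cpt) : BoxLeading C → BoxLeading (.meet C C₁)
  | join {C₁ C₂ : Cpt} : BoxLeading C₁ → BoxLeading C₂ → BoxLeading (.join C₁ C₂)

/-!
The adjunction and `I`-compatibility rules make `b R_□ y ∈ Ā` equivalent to
`b I □y ∈ Ā` and to `◆b I y ∈ Ā` (dually for `R_◇`), so every row and column of `R_□` and `R_◇` in
the canonical model is a row or column of `I`; this is the `I`-compatibility of the model. The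
creation, appending and basic rules make `(x_C↓, a_C↑)` a formal concept for every concept `C`
occurring in `A`, and the rules for the connectives show, by induction on `C`, that it is `C^M`.
Hence the positive terms of `A` hold in the canonical model. A negative term `¬β` of `A` holds
too: otherwise `β ∈ Ā`, and since every rule is sound for the reading of names as concepts
(`a_C` as `C^M`, `◇b` as `⟨R_◇⟩` of the concept of `b`, ...), `β` would hold in every model of
`A`, contradicting consistency.

For the size, the rules preserve a numeric invariant (`Term.Admissible`): the `◇`s carried by an
object are paid for by the features it is related to and the `◆`s by its own box budget, and
dually. So every object name of `Ā` has the shape `◇ⁱ◆ʲr`, with `i ≤ ◇_D(A) + 1`,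
`j ≤ □_D(A) + 1` and `r` a name of `A` or `a_{◇ᵏC}` for a concept `C` of `A`, and dually for
features: polynomially many names.
-/

open Order

section Galois
variable {O F : Type} {I : O → F → Prop}

lemma stableO_iff_isExtent {B : Set O} : StableO I B ↔ IsExtent I B := isExtent_iff.symm

lemma stableF_iff_isIntent {Y : Set F} : StableF I Y ↔ IsIntent I Y := isIntent_iff.symm

lemma gdn_eq_biInter (R : O → F → Prop) (Y : Set F) : gdn R Y = ⋂ x ∈ Y, {a | R a x} := by
  ext; simp [gdn]

lemma gup_eq_biInter (R : O → F → Prop) (B : Set O) : gup R B = ⋂ a ∈ B, {x | R a x} := by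
  ext; simp [gup]

lemma stableO_gdn_of_forall {R : O → F → Prop} (hR : ∀ x, StableO I {a | R a x}) (Y : Set F) :
    StableO I (gdn R Y) := by
  rw [gdn_eq_biInter, stableO_iff_isExtent]
  exact IsExtent.iInter₂ _ fun x _ => stableO_iff_isExtent.1 (hR x)

lemma stableF_gup_of_forall {R : O → F → Prop} (hR : ∀ a, StableF I {x | R a x}) (B : Set O) :
    StableF I (gup R B) := by
  rw [gup_eq_biInter, stableF_iff_isIntent]
  exact IsIntent.iInter₂ _ fun a _ => stableF_iff_isIntent.1 (hR a)

lemma stableO_setOf_of_iff {R : O → Prop} {x : F} (h : ∀ a, R a ↔ I a x) :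
    StableO I {a | R a} := by
  have : {a | R a} = lowerPolar I {x} := by ext; simp [h]
  rw [this, stableO_iff_isExtent]
  exact isExtent_lowerPolar

lemma stableF_setOf_of_iff {R : F → Prop} {a : O} (h : ∀ x, R x ↔ I a x) :
    StableF I {x | R x} := by
  have : {x | R x} = upperPolar I {a} := by ext; simp [h]
  rw [this, stableF_iff_isIntent]
  exact isIntent_upperPolar

end Galois

section Completion
variable {E : Term → Term → Prop} {A S S' : Set Term} {t : Term}

lemma Deriv.mono (hSS : S ⊆ S') (h : Deriv E A S t) : Deriv E A S' t := by
  cases h with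
  | create_a h => exact .create_a h
  | create_x h => exact .create_x h
  | basic h₁ h₂ => exact .basic (hSS h₁) (hSS h₂)
  | andA_l h => exact .andA_l (hSS h)
  | andA_r h => exact .andA_r (hSS h)
  | orX_l h => exact .orX_l (hSS h)
  | orX_r h => exact .orX_r (hSS h)
  | boxR h₁ h₂ => exact .boxR (hSS h₁) (hSS h₂)
  | diaR h₁ h₂ => exact .diaR (hSS h₁) (hSS h₂)
  | andA_inv h₁ h₂ hC => exact .andA_inv (hSS h₁) (hSS h₂) hC
  | orX_inv h₁ h₂ hC => exact .orX_inv (hSS h₁) (hSS h₂) hC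
  | adj_box_l h => exact .adj_box_l (hSS h)
  | adj_box_r h => exact .adj_box_r (hSS h)
  | adj_dia_l h => exact .adj_dia_l (hSS h)
  | adj_dia_r h => exact .adj_dia_r (hSS h)
  | icomp_box h => exact .icomp_box (hSS h)
  | icomp_bbox h => exact .icomp_bbox (hSS h)
  | icomp_dia h => exact .icomp_dia (hSS h)
  | icomp_bdia h => exact .icomp_bdia (hSS h)
  | neg_b h => exact .neg_b (hSS h)
  | neg_x h => exact .neg_x (hSS h)
  | app_x h => exact .app_x (hSS h)
  | app_a h => exact .app_a (hSS h)
  | extra hE h => exact .extra hE (hSS h)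

lemma ruleClosed_compl (E : Term → Term → Prop) (A : Set Term) : RuleClosed E A (Compl E A) :=
  ⟨fun _ ht _ hS => hS.1 ht,
    fun _ hd S hS => hS.2 _ (hd.mono fun (u : Term) (hu : u ∈ Compl E A) => hu S hS)⟩

lemma compl_subset_of_ruleClosed (h : RuleClosed E A S) : Compl E A ⊆ S := fun _ ht => ht S h

end Completion

lemma mem_subs_self (C : Cpt) : C ∈ C.subs := by
  cases C <;> simp [Cpt.subs]

lemma mem_subs_trans {C₁ C₂ C₃ : Cpt} (h₁₂ : C₁ ∈ C₂.subs) (h₂₃ : C₂ ∈ C₃.subs) :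
    C₁ ∈ C₃.subs := by
  induction C₃ <;>
    simp only [Cpt.subs, Finset.mem_insert, Finset.mem_union, Finset.mem_singleton] at h₂₃ ⊢ <;>
    aesop (add norm simp Cpt.subs)

lemma Occurs.of_mem_subs {S : Set Term} {C C' : Cpt} (h : Occurs C S) (h' : C' ∈ C.subs) :
    Occurs C' S := by
  obtain ⟨t, ht, hC⟩ := h
  refine ⟨t, ht, ?_⟩
  rcases t with p | p <;> rcases p <;> simp only [Term.cpts] at hC ⊢ <;>
    first | exact absurd hC (Finset.notMem_empty _) | exact mem_subs_trans h' hC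

namespace Occurs
variable {S : Set Term} {C C₁ C₂ : Cpt}

lemma meet_left (h : Occurs (.meet C₁ C₂) S) : Occurs C₁ S :=
  h.of_mem_subs (by simp [Cpt.subs, mem_subs_self])

lemma meet_right (h : Occurs (.meet C₁ C₂) S) : Occurs C₂ S :=
  h.of_mem_subs (by simp [Cpt.subs, mem_subs_self])

lemma join_left (h : Occurs (.join C₁ C₂) S) : Occurs C₁ S :=
  h.of_mem_subs (by simp [Cpt.subs, mem_subs_self])

lemma join_right (h : Occurs (.join C₁ C₂) S) : Occurs C₂ S :=
  h.of_mem_subs (by simp [Cpt.subs, mem_subs_self])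

lemma of_box (h : Occurs (.box C) S) : Occurs C S :=
  h.of_mem_subs (by simp [Cpt.subs, mem_subs_self])

lemma of_dia (h : Occurs (.dia C) S) : Occurs C S :=
  h.of_mem_subs (by simp [Cpt.subs, mem_subs_self])

end Occurs

section CanonicalModel
variable {A : Finset Term}
local notation "Ā" => Compl noExt (A : Set Term)

lemma mem_compl_of_mem {t : Term} (h : t ∈ A) : t ∈ Ā := (ruleClosed_compl _ _).1 h

lemma mem_compl_of_deriv {t : Term} (h : Deriv noExt ↑A Ā t) : t ∈ Ā :=
  (ruleClosed_compl _ _).2 t h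

lemma canModel_oi_of_obOccurs {b : ObName} (h : ObOccurs b Ā) : (canModel A).oi b = some ⟨b, h⟩ :=
  dif_pos h

lemma canModel_fi_of_ftOccurs {y : FtName} (h : FtOccurs y Ā) : (canModel A).fi y = some ⟨y, h⟩ :=
  dif_pos h

lemma canModel_ob_cases (a : (canModel A).Ob) :
    (∀ x, ¬ (canModel A).I a x ∧ ¬ (canModel A).Rb a x ∧ ¬ (canModel A).Rd x a) ∨
      ∃ b, a = (canModel A).oi b := by
  rcases a with _ | ⟨b, hb⟩
  · exact .inl fun x => by simp [canModel]
  · exact .inr ⟨b, (canModel_oi_of_obOccurs hb).symm⟩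

lemma canModel_ft_cases (x : (canModel A).Ft) :
    (∀ a, ¬ (canModel A).I a x ∧ ¬ (canModel A).Rb a x ∧ ¬ (canModel A).Rd x a) ∨
      ∃ y, x = (canModel A).fi y := by
  rcases x with _ | ⟨y, hy⟩
  · exact .inl fun a => by simp [canModel]
  · exact .inr ⟨y, (canModel_fi_of_ftOccurs hy).symm⟩

lemma canModel_oi_eq_some {b : ObName} {p : {b // ObOccurs b Ā}}
    (h : (canModel A).oi b = some p) : p.1 = b := by
  by_cases hb : ObOccurs b Ā
  · rw [canModel_oi_of_obOccurs hb] at h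
    cases Option.some.inj h
    rfl
  · simp [canModel, cdite, hb] at h

lemma canModel_fi_eq_some {y : FtName} {q : {y // FtOccurs y Ā}}
    (h : (canModel A).fi y = some q) : q.1 = y := by
  by_cases hy : FtOccurs y Ā
  · rw [canModel_fi_of_ftOccurs hy] at h
    cases Option.some.inj h
    rfl
  · simp [canModel, cdite, hy] at h

lemma exists_oi_fi_eq_some_iff {P : ObName → FtName → Prop} {b : ObName} {y : FtName}
    (hP : P b y → ObOccurs b Ā ∧ FtOccurs y Ā) :
    (∃ p q, (canModel A).oi b = some p ∧ (canModel A).fi y = some q ∧ P p.1 q.1) ↔ P b y := by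
  constructor
  · rintro ⟨p, q, hp, hq, h⟩
    rwa [← canModel_oi_eq_some hp, ← canModel_fi_eq_some hq]
  · intro h
    obtain ⟨hb, hy⟩ := hP h
    exact ⟨_, _, canModel_oi_of_obOccurs hb, canModel_fi_of_ftOccurs hy, h⟩

lemma canModel_I_iff {b : ObName} {y : FtName} :
    (canModel A).I ((canModel A).oi b) ((canModel A).fi y) ↔ Term.pos (.rI b y) ∈ Ā :=
  exists_oi_fi_eq_some_iff (P := fun b y => Term.pos (.rI b y) ∈ Ā) fun h =>
    ⟨⟨_, h, List.mem_singleton_self b⟩, ⟨_, h, List.mem_singleton_self y⟩⟩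

lemma canModel_Rb_iff {b : ObName} {y : FtName} :
    (canModel A).Rb ((canModel A).oi b) ((canModel A).fi y) ↔ Term.pos (.rbox b y) ∈ Ā :=
  exists_oi_fi_eq_some_iff (P := fun b y => Term.pos (.rbox b y) ∈ Ā) fun h =>
    ⟨⟨_, h, List.mem_singleton_self b⟩, ⟨_, h, List.mem_singleton_self y⟩⟩

lemma canModel_Rd_iff {b : ObName} {y : FtName} :
    (canModel A).Rd ((canModel A).fi y) ((canModel A).oi b) ↔ Term.pos (.rdia y b) ∈ Ā :=
  exists_oi_fi_eq_some_iff (P := fun b y => Term.pos (.rdia y b) ∈ Ā) fun h =>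
    ⟨⟨_, h, List.mem_singleton_self b⟩, ⟨_, h, List.mem_singleton_self y⟩⟩

lemma rbox_mem_compl_iff_boxS {b : ObName} {y : FtName} :
    Term.pos (.rbox b y) ∈ Ā ↔ Term.pos (.rI b (FtName.boxS y)) ∈ Ā :=
  ⟨fun h => mem_compl_of_deriv (.adj_box_r h), fun h => mem_compl_of_deriv (.icomp_box h)⟩

lemma rbox_mem_compl_iff_bdia {b : ObName} {y : FtName} :
    Term.pos (.rbox b y) ∈ Ā ↔ Term.pos (.rI (.bdia b) y) ∈ Ā :=
  ⟨fun h => mem_compl_of_deriv (.adj_box_l h), fun h => mem_compl_of_deriv (.icomp_bdia h)⟩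

lemma rdia_mem_compl_iff_diaS {b : ObName} {y : FtName} :
    Term.pos (.rdia y b) ∈ Ā ↔ Term.pos (.rI (ObName.diaS b) y) ∈ Ā :=
  ⟨fun h => mem_compl_of_deriv (.adj_dia_l h), fun h => mem_compl_of_deriv (.icomp_dia h)⟩

lemma rdia_mem_compl_iff_bbox {b : ObName} {y : FtName} :
    Term.pos (.rdia y b) ∈ Ā ↔ Term.pos (.rI b (.bbox y)) ∈ Ā :=
  ⟨fun h => mem_compl_of_deriv (.adj_dia_r h), fun h => mem_compl_of_deriv (.icomp_bbox h)⟩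

lemma canModel_vA_eq (n : ℕ) :
    (canModel A).vA n = {a | (canModel A).I a ((canModel A).fi (.cls (.atom n)))} := by
  ext a
  constructor
  · rintro ⟨⟨b, hb⟩, rfl, h⟩
    rw [← canModel_oi_of_obOccurs hb]
    exact canModel_I_iff.2 h
  · intro h
    rcases canModel_ob_cases a with ha | ⟨b, rfl⟩
    · exact absurd h (ha _).1
    rw [Set.mem_ofPred_eq, canModel_I_iff] at h
    exact ⟨_, canModel_oi_of_obOccurs ⟨_, h, List.mem_singleton_self b⟩, h⟩

lemma canModel_good : (canModel A).Good := by
  refine ⟨fun x => ?_, fun a => ?_, fun a => ?_, fun x => ?_, fun n => ?_⟩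
  · rcases canModel_ft_cases x with hx | ⟨y, rfl⟩
    · exact stableO_setOf_of_iff (x := x) fun a => iff_of_false (hx a).2.1 (hx a).1
    refine stableO_setOf_of_iff (x := (canModel A).fi (FtName.boxS y)) fun a => ?_
    rcases canModel_ob_cases a with ha | ⟨b, rfl⟩
    · exact iff_of_false (ha _).2.1 (ha _).1
    rw [canModel_Rb_iff, canModel_I_iff, rbox_mem_compl_iff_boxS]
  · rcases canModel_ob_cases a with ha | ⟨b, rfl⟩
    · exact stableF_setOf_of_iff (a := a) fun x => iff_of_false (ha x).2.1 (ha x).1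
    refine stableF_setOf_of_iff (a := (canModel A).oi (.bdia b)) fun x => ?_
    rcases canModel_ft_cases x with hx | ⟨y, rfl⟩
    · exact iff_of_false (hx _).2.1 (hx _).1
    rw [canModel_Rb_iff, canModel_I_iff, rbox_mem_compl_iff_bdia]
  · rcases canModel_ob_cases a with ha | ⟨b, rfl⟩
    · exact stableF_setOf_of_iff (a := a) fun x => iff_of_false (ha x).2.2 (ha x).1
    refine stableF_setOf_of_iff (a := (canModel A).oi (ObName.diaS b)) fun x => ?_
    rcases canModel_ft_cases x with hx | ⟨y, rfl⟩
    · exact iff_of_false (hx _).2.2 (hx _).1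
    rw [canModel_Rd_iff, canModel_I_iff, rdia_mem_compl_iff_diaS]
  · rcases canModel_ft_cases x with hx | ⟨y, rfl⟩
    · exact stableO_setOf_of_iff (x := x) fun a => iff_of_false (hx a).2.2 (hx a).1
    refine stableO_setOf_of_iff (x := (canModel A).fi (.bbox y)) fun a => ?_
    rcases canModel_ob_cases a with ha | ⟨b, rfl⟩
    · exact iff_of_false (ha _).2.2 (ha _).1
    rw [canModel_Rd_iff, canModel_I_iff, rdia_mem_compl_iff_bbox]
  · rw [canModel_vA_eq]
    exact stableO_setOf_of_iff fun _ => Iff.rfl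

section TruthLemma
variable {b : ObName} {y : FtName} {C C₁ C₂ : Cpt}

lemma rI_cls_mem_compl_iff (hC : Occurs C ↑A) :
    Term.pos (.rI b (.cls C)) ∈ Ā ↔ Term.pos (.mem b C) ∈ Ā :=
  ⟨fun h => mem_compl_of_deriv (.app_x h),
    fun h => mem_compl_of_deriv (.basic h (mem_compl_of_deriv (.create_x hC)))⟩

lemma rI_cls_left_mem_compl_iff (hC : Occurs C ↑A) :
    Term.pos (.rI (.cls C) y) ∈ Ā ↔ Term.pos (.fmem y C) ∈ Ā :=
  ⟨fun h => mem_compl_of_deriv (.app_a h),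
    fun h => mem_compl_of_deriv (.basic (mem_compl_of_deriv (.create_a hC)) h)⟩

lemma mem_meet_mem_compl_iff (hC : Occurs (.meet C₁ C₂) ↑A) :
    Term.pos (.mem b (.meet C₁ C₂)) ∈ Ā ↔
      Term.pos (.mem b C₁) ∈ Ā ∧ Term.pos (.mem b C₂) ∈ Ā :=
  ⟨fun h => ⟨mem_compl_of_deriv (.andA_l h), mem_compl_of_deriv (.andA_r h)⟩,
    fun h => mem_compl_of_deriv (.andA_inv h.1 h.2 hC)⟩

lemma fmem_join_mem_compl_iff (hC : Occurs (.join C₁ C₂) ↑A) :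
    Term.pos (.fmem y (.join C₁ C₂)) ∈ Ā ↔
      Term.pos (.fmem y C₁) ∈ Ā ∧ Term.pos (.fmem y C₂) ∈ Ā :=
  ⟨fun h => ⟨mem_compl_of_deriv (.orX_l h), mem_compl_of_deriv (.orX_r h)⟩,
    fun h => mem_compl_of_deriv (.orX_inv h.1 h.2 hC)⟩

lemma canModel_I_cls_cls (hC : Occurs C ↑A) :
    (canModel A).I ((canModel A).oi (.cls C)) ((canModel A).fi (.cls C)) :=
  canModel_I_iff.2 <|
    mem_compl_of_deriv <|
      .basic (mem_compl_of_deriv (.create_a hC)) (mem_compl_of_deriv (.create_x hC))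

lemma canModel_I_of_I_cls {a : (canModel A).Ob} {x : (canModel A).Ft}
    (ha : (canModel A).I a ((canModel A).fi (.cls C)))
    (hx : (canModel A).I ((canModel A).oi (.cls C)) x) : (canModel A).I a x := by
  rcases canModel_ob_cases a with ha' | ⟨b, rfl⟩
  · exact absurd ha (ha' _).1
  rcases canModel_ft_cases x with hx' | ⟨y, rfl⟩
  · exact absurd hx (hx' _).1
  rw [canModel_I_iff] at ha hx ⊢
  exact mem_compl_of_deriv <|
    .basic (mem_compl_of_deriv (.app_x ha)) (mem_compl_of_deriv (.app_a hx))

lemma canModel_gup_extent (hC : Occurs C ↑A) :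
    gup (canModel A).I {a | (canModel A).I a ((canModel A).fi (.cls C))} =
      {x | (canModel A).I ((canModel A).oi (.cls C)) x} :=
  Set.Subset.antisymm (fun _ hx => hx _ (canModel_I_cls_cls hC))
    fun _ hx _ ha => canModel_I_of_I_cls ha hx

lemma canModel_gdn_intent (hC : Occurs C ↑A) :
    gdn (canModel A).I {x | (canModel A).I ((canModel A).oi (.cls C)) x} =
      {a | (canModel A).I a ((canModel A).fi (.cls C))} :=
  Set.Subset.antisymm (fun _ ha => ha _ (canModel_I_cls_cls hC))
    fun _ ha _ hx => canModel_I_of_I_cls ha hx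

lemma canModel_extent_meet (hC : Occurs (.meet C₁ C₂) ↑A) :
    {a | (canModel A).I a ((canModel A).fi (.cls C₁))} ∩
        {a | (canModel A).I a ((canModel A).fi (.cls C₂))} =
      {a | (canModel A).I a ((canModel A).fi (.cls (.meet C₁ C₂)))} := by
  ext a
  rcases canModel_ob_cases a with ha | ⟨b, rfl⟩
  · simp [ha]
  simp only [Set.mem_inter_iff, Set.mem_ofPred_eq, canModel_I_iff, rI_cls_mem_compl_iff hC,
    rI_cls_mem_compl_iff hC.meet_left, rI_cls_mem_compl_iff hC.meet_right,
    mem_meet_mem_compl_iff hC]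

lemma canModel_intent_join (hC : Occurs (.join C₁ C₂) ↑A) :
    {x | (canModel A).I ((canModel A).oi (.cls C₁)) x} ∩
        {x | (canModel A).I ((canModel A).oi (.cls C₂)) x} =
      {x | (canModel A).I ((canModel A).oi (.cls (.join C₁ C₂))) x} := by
  ext x
  rcases canModel_ft_cases x with hx | ⟨y, rfl⟩
  · simp [hx]
  simp only [Set.mem_inter_iff, Set.mem_ofPred_eq, canModel_I_iff, rI_cls_left_mem_compl_iff hC,
    rI_cls_left_mem_compl_iff hC.join_left, rI_cls_left_mem_compl_iff hC.join_right,
    fmem_join_mem_compl_iff hC]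

lemma canModel_gdn_Rb_intent (hC : Occurs (.box C) ↑A) :
    gdn (canModel A).Rb {x | (canModel A).I ((canModel A).oi (.cls C)) x} =
      {a | (canModel A).I a ((canModel A).fi (.cls (.box C)))} := by
  refine Set.Subset.antisymm (fun a ha => ?_) (fun a ha x hx => ?_)
  · have hRb := ha _ (canModel_I_cls_cls hC.of_box)
    rcases canModel_ob_cases a with ha' | ⟨b, rfl⟩
    · exact absurd hRb (ha' _).2.1
    rw [canModel_Rb_iff, rbox_mem_compl_iff_boxS] at hRb
    exact canModel_I_iff.2 hRb
  · rcases canModel_ob_cases a with ha' | ⟨b, rfl⟩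
    · exact absurd ha (ha' _).1
    rcases canModel_ft_cases x with hx' | ⟨y, rfl⟩
    · exact absurd hx (hx' _).1
    rw [Set.mem_ofPred_eq, canModel_I_iff, rI_cls_mem_compl_iff hC] at ha
    rw [Set.mem_ofPred_eq, canModel_I_iff, rI_cls_left_mem_compl_iff hC.of_box] at hx
    exact canModel_Rb_iff.2 (mem_compl_of_deriv (.boxR ha hx))

lemma canModel_gup_Rd_extent (hC : Occurs (.dia C) ↑A) :
    gup (fun a x => (canModel A).Rd x a) {a | (canModel A).I a ((canModel A).fi (.cls C))} =
      {x | (canModel A).I ((canModel A).oi (.cls (.dia C))) x} := by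
  refine Set.Subset.antisymm (fun x hx => ?_) (fun x hx a ha => ?_)
  · have hRd := hx _ (canModel_I_cls_cls hC.of_dia)
    rcases canModel_ft_cases x with hx' | ⟨y, rfl⟩
    · exact absurd hRd (hx' _).2.2
    rw [canModel_Rd_iff, rdia_mem_compl_iff_diaS] at hRd
    exact canModel_I_iff.2 hRd
  · rcases canModel_ob_cases a with ha' | ⟨b, rfl⟩
    · exact absurd ha (ha' _).1
    rcases canModel_ft_cases x with hx' | ⟨y, rfl⟩
    · exact absurd hx (hx' _).1
    rw [Set.mem_ofPred_eq, canModel_I_iff, rI_cls_mem_compl_iff hC.of_dia] at ha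
    rw [Set.mem_ofPred_eq, canModel_I_iff, rI_cls_left_mem_compl_iff hC] at hx
    exact canModel_Rd_iff.2 (mem_compl_of_deriv (.diaR hx ha))

theorem canModel_ci (hC : Occurs C ↑A) :
    (canModel A).ci C = ({a | (canModel A).I a ((canModel A).fi (.cls C))},
      {x | (canModel A).I ((canModel A).oi (.cls C)) x}) := by
  induction C with
  | atom n =>
      simp only [Model.ci, Model.vX, canModel_vA_eq, canModel_gup_extent hC]
  | meet C₁ C₂ ih₁ ih₂ =>
      simp only [Model.ci, ih₁ hC.meet_left, ih₂ hC.meet_right, canModel_extent_meet hC,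
        canModel_gup_extent hC]
  | join C₁ C₂ ih₁ ih₂ =>
      simp only [Model.ci, ih₁ hC.join_left, ih₂ hC.join_right, canModel_intent_join hC,
        canModel_gdn_intent hC]
  | box C ih =>
      simp only [Model.ci, ih hC.of_box, canModel_gdn_Rb_intent hC, canModel_gup_extent hC]
  | dia C ih =>
      simp only [Model.ci, ih hC.of_dia, canModel_gup_Rd_extent hC, canModel_gdn_intent hC]

end TruthLemma

end CanonicalModel

namespace Model
variable {M : Model}

def IsConcept (M : Model) (c : Set M.Ob × Set M.Ft) : Prop :=
  c.1 = gdn M.I c.2 ∧ c.2 = gup M.I c.1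

def Le (M : Model) (c d : Set M.Ob × Set M.Ft) : Prop := c.1 ⊆ d.1 ∧ d.2 ⊆ c.2

section ConceptAlgebra
variable {c d f : Set M.Ob × Set M.Ft}

lemma Le.refl (c : Set M.Ob × Set M.Ft) : M.Le c c := ⟨subset_rfl, subset_rfl⟩

lemma Le.trans (h₁ : M.Le c d) (h₂ : M.Le d f) : M.Le c f :=
  ⟨h₁.1.trans h₂.1, h₂.2.trans h₁.2⟩

lemma IsConcept.isExtent (hc : M.IsConcept c) : IsExtent M.I c.1 := by
  rw [hc.1]; exact isExtent_lowerPolar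

lemma IsConcept.isIntent (hc : M.IsConcept c) : IsIntent M.I c.2 := by
  rw [hc.2]; exact isIntent_upperPolar

lemma le_iff_fst_subset (hc : M.IsConcept c) (hd : M.IsConcept d) : M.Le c d ↔ c.1 ⊆ d.1 :=
  ⟨And.left, fun h => ⟨h, by rw [hc.2, hd.2]; exact upperPolar_anti _ h⟩⟩

lemma le_iff_snd_subset (hc : M.IsConcept c) (hd : M.IsConcept d) : M.Le c d ↔ d.2 ⊆ c.2 :=
  ⟨And.right, fun h => ⟨by rw [hc.1, hd.1]; exact lowerPolar_anti _ h, h⟩⟩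

lemma isConcept_genO (a : M.Ob) : M.IsConcept (M.genO a) :=
  ⟨rfl, (upperPolar_lowerPolar_upperPolar M.I {a}).symm⟩

lemma isConcept_genF (x : M.Ft) : M.IsConcept (M.genF x) :=
  ⟨(lowerPolar_upperPolar_lowerPolar M.I {x}).symm, rfl⟩

lemma isConcept_cbox (hM : M.Good) (c : Set M.Ob × Set M.Ft) : M.IsConcept (M.cbox c) :=
  ⟨(stableO_gdn_of_forall hM.1 c.2).symm, rfl⟩

lemma isConcept_cdia (hM : M.Good) (c : Set M.Ob × Set M.Ft) : M.IsConcept (M.cdia c) :=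
  ⟨rfl, (stableF_gup_of_forall (R := fun a x => M.Rd x a) hM.2.2.1 c.1).symm⟩

lemma isConcept_cbdia (hM : M.Good) (c : Set M.Ob × Set M.Ft) : M.IsConcept (M.cbdia c) :=
  ⟨rfl, (stableF_gup_of_forall hM.2.1 c.1).symm⟩

lemma isConcept_cbbox (hM : M.Good) (c : Set M.Ob × Set M.Ft) : M.IsConcept (M.cbbox c) :=
  ⟨(stableO_gdn_of_forall (R := fun a x => M.Rd x a) hM.2.2.2.1 c.2).symm, rfl⟩

lemma isConcept_ci (hM : M.Good) (C : Cpt) : M.IsConcept (M.ci C) := by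
  induction C with
  | atom n => exact ⟨(hM.2.2.2.2 n).symm, rfl⟩
  | meet C₁ C₂ ih₁ ih₂ =>
      exact ⟨(ih₁.isExtent.inter ih₂.isExtent).eq.symm, rfl⟩
  | join C₁ C₂ ih₁ ih₂ =>
      exact ⟨rfl, (ih₁.isIntent.inter ih₂.isIntent).eq.symm⟩
  | box C _ => exact isConcept_cbox hM _
  | dia C _ => exact isConcept_cdia hM _

lemma cbox_mono (h : M.Le c d) : M.Le (M.cbox c) (M.cbox d) :=
  have h' : gdn M.Rb c.2 ⊆ gdn M.Rb d.2 := lowerPolar_anti _ h.2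
  ⟨h', upperPolar_anti _ h'⟩

lemma cdia_mono (h : M.Le c d) : M.Le (M.cdia c) (M.cdia d) :=
  have h' : gup (fun a x => M.Rd x a) d.1 ⊆ gup (fun a x => M.Rd x a) c.1 := upperPolar_anti _ h.1
  ⟨lowerPolar_anti _ h', h'⟩

/-- `◆ ⊣ [R_□]` and `⟨R_◇⟩ ⊣ ■` are both instances of this adjunction. -/
lemma le_iff_le_of_rel (R : M.Ob → M.Ft → Prop) (hc : M.IsConcept c) (hf : M.IsConcept f) :
    M.Le (gdn M.I (gup R c.1), gup R c.1) f ↔ M.Le c (gdn R f.2, gup M.I (gdn R f.2)) := by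
  constructor
  · intro h
    have h' : c.1 ⊆ gdn R f.2 := subset_upperPolar_iff_subset_lowerPolar.1 h.2
    exact ⟨h', by rw [hc.2]; exact upperPolar_anti _ h'⟩
  · intro h
    have h' : f.2 ⊆ gup R c.1 := subset_upperPolar_iff_subset_lowerPolar.2 h.1
    exact ⟨by rw [hf.1]; exact lowerPolar_anti _ h', h'⟩

lemma cbdia_le_iff (hc : M.IsConcept c) (hf : M.IsConcept f) :
    M.Le (M.cbdia c) f ↔ M.Le c (M.cbox f) :=
  le_iff_le_of_rel M.Rb hc hf

lemma cdia_le_iff (hc : M.IsConcept c) (hf : M.IsConcept f) :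
    M.Le (M.cdia c) f ↔ M.Le c (M.cbbox f) :=
  le_iff_le_of_rel (fun a x => M.Rd x a) hc hf

lemma le_ci_meet_iff (hM : M.Good) (hc : M.IsConcept c) {C₁ C₂ : Cpt} :
    M.Le c (M.ci (.meet C₁ C₂)) ↔ M.Le c (M.ci C₁) ∧ M.Le c (M.ci C₂) := by
  rw [le_iff_fst_subset hc (isConcept_ci hM _), le_iff_fst_subset hc (isConcept_ci hM _),
    le_iff_fst_subset hc (isConcept_ci hM _)]
  exact Set.subset_inter_iff

lemma ci_join_le_iff (hM : M.Good) (hf : M.IsConcept f) {C₁ C₂ : Cpt} :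
    M.Le (M.ci (.join C₁ C₂)) f ↔ M.Le (M.ci C₁) f ∧ M.Le (M.ci C₂) f := by
  rw [le_iff_snd_subset (isConcept_ci hM _) hf, le_iff_snd_subset (isConcept_ci hM _) hf,
    le_iff_snd_subset (isConcept_ci hM _) hf]
  exact Set.subset_inter_iff

lemma genO_le_iff (hc : M.IsConcept c) {a : M.Ob} : M.Le (M.genO a) c ↔ a ∈ c.1 := by
  rw [le_iff_fst_subset (isConcept_genO a) hc]
  refine ⟨fun h => h (subset_lowerPolar_upperPolar M.I {a} rfl), fun h => ?_⟩
  exact hc.isExtent.lowerPolar_upperPolar_subset (Set.singleton_subset_iff.2 h)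

lemma le_genF_iff (hc : M.IsConcept c) {x : M.Ft} : M.Le c (M.genF x) ↔ x ∈ c.2 := by
  rw [le_iff_snd_subset hc (isConcept_genF x)]
  refine ⟨fun h => h (subset_upperPolar_lowerPolar M.I {x} rfl), fun h => ?_⟩
  exact hc.isIntent.upperPolar_lowerPolar_subset (Set.singleton_subset_iff.2 h)

lemma mem_gdn_genF_iff {R : M.Ob → M.Ft → Prop} {a : M.Ob} {x : M.Ft}
    (hR : StableF M.I {x' | R a x'}) : a ∈ gdn R (M.genF x).2 ↔ R a x := by
  refine ⟨fun h => h x (subset_upperPolar_lowerPolar M.I {x} rfl), fun h x' hx' => ?_⟩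
  exact (stableF_iff_isIntent.1 hR).upperPolar_lowerPolar_subset
    (Set.singleton_subset_iff.2 h) hx'

lemma genO_le_genF_iff {a : M.Ob} {x : M.Ft} : M.Le (M.genO a) (M.genF x) ↔ M.I a x :=
  (genO_le_iff (isConcept_genF x)).trans (by simp [genF, gdn])

lemma genO_le_cbox_genF_iff (hM : M.Good) {a : M.Ob} {x : M.Ft} :
    M.Le (M.genO a) (M.cbox (M.genF x)) ↔ M.Rb a x :=
  (genO_le_iff (isConcept_cbox hM _)).trans (mem_gdn_genF_iff (hM.2.1 a))

lemma cdia_genO_le_genF_iff (hM : M.Good) {a : M.Ob} {x : M.Ft} :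
    M.Le (M.cdia (M.genO a)) (M.genF x) ↔ M.Rd x a :=
  (cdia_le_iff (isConcept_genO a) (isConcept_genF x)).trans <|
    (genO_le_iff (isConcept_cbbox hM _)).trans
      (mem_gdn_genF_iff (R := fun a x => M.Rd x a) (hM.2.2.1 a))

end ConceptAlgebra

/-- Like `Model.conO`, except that `a_C` denotes `C^M` itself, which makes the creation rule
sound in every model. -/
def denO (M : Model) : ObName → Set M.Ob × Set M.Ft
  | .base n => M.genO (M.oi (.base n))
  | .cls C => M.ci C
  | .dia b => M.cdia (denO M b)
  | .bdia b => M.cbdia (denO M b)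

def denF (M : Model) : FtName → Set M.Ob × Set M.Ft
  | .base n => M.genF (M.fi (.base n))
  | .cls C => M.ci C
  | .box y => M.cbox (denF M y)
  | .bbox y => M.cbbox (denF M y)

lemma isConcept_denO (hM : M.Good) (b : ObName) : M.IsConcept (M.denO b) := by
  cases b with
  | base n => exact isConcept_genO _
  | cls C => exact isConcept_ci hM C
  | dia b => exact isConcept_cdia hM _
  | bdia b => exact isConcept_cbdia hM _

lemma isConcept_denF (hM : M.Good) (y : FtName) : M.IsConcept (M.denF y) := by
  cases y with
  | base n => exact isConcept_genF _
  | cls C => exact isConcept_ci hM C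
  | box y => exact isConcept_cbox hM _
  | bbox y => exact isConcept_cbbox hM _

lemma denO_diaS (b : ObName) : M.denO (ObName.diaS b) = M.cdia (M.denO b) := by
  cases b <;> rfl

lemma denF_boxS (y : FtName) : M.denF (FtName.boxS y) = M.cbox (M.denF y) := by
  cases y <;> rfl

/-- Satisfaction of `p` with every name read as the concept it denotes. -/
def SatCon (M : Model) : PTerm → Prop
  | .rI b y => M.Le (M.denO b) (M.denF y)
  | .rbox b y => M.Le (M.denO b) (M.cbox (M.denF y))
  | .rdia y b => M.Le (M.cdia (M.denO b)) (M.denF y)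
  | .mem b C => M.Le (M.denO b) (M.ci C)
  | .fmem y C => M.Le (M.ci C) (M.denF y)

lemma satCon_iff_satP (hM : M.Good) {p : PTerm} (hp : (Term.pos p).Plain) :
    M.SatCon p ↔ M.SatP p := by
  obtain ⟨hob, hft⟩ := hp
  rcases p with ⟨b, y⟩ | ⟨b, y⟩ | ⟨y, b⟩ | ⟨b, C⟩ | ⟨y, C⟩ <;>
    simp only [Term.objs, Term.feats, PTerm.objs, PTerm.feats, List.mem_cons,
      List.not_mem_nil, or_false, forall_eq] at hob hft
  · obtain ⟨⟨n, rfl⟩, ⟨m, rfl⟩⟩ := hob, hft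
    exact genO_le_genF_iff
  · obtain ⟨⟨n, rfl⟩, ⟨m, rfl⟩⟩ := hob, hft
    exact genO_le_cbox_genF_iff hM
  · obtain ⟨⟨n, rfl⟩, ⟨m, rfl⟩⟩ := hob, hft
    exact cdia_genO_le_genF_iff hM
  · obtain ⟨n, rfl⟩ := hob
    exact genO_le_iff (isConcept_ci hM C)
  · obtain ⟨m, rfl⟩ := hft
    exact le_genF_iff (isConcept_ci hM C)

lemma satCon_of_deriv (hM : M.Good) {A S : Set Term} {p : PTerm}
    (hS : ∀ q, Term.pos q ∈ S → M.SatCon q) (hd : Deriv noExt A S (.pos p)) : M.SatCon p := by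
  cases hd with
  | create_a => exact Le.refl _
  | create_x => exact Le.refl _
  | basic h₁ h₂ => exact (hS _ h₁).trans (hS _ h₂)
  | andA_l h => exact ((le_ci_meet_iff hM (isConcept_denO hM _)).1 (hS _ h)).1
  | andA_r h => exact ((le_ci_meet_iff hM (isConcept_denO hM _)).1 (hS _ h)).2
  | orX_l h => exact ((ci_join_le_iff hM (isConcept_denF hM _)).1 (hS _ h)).1
  | orX_r h => exact ((ci_join_le_iff hM (isConcept_denF hM _)).1 (hS _ h)).2
  | boxR h₁ h₂ => exact (hS _ h₁).trans (cbox_mono (hS _ h₂))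
  | diaR h₁ h₂ => exact (cdia_mono (hS _ h₂)).trans (hS _ h₁)
  | andA_inv h₁ h₂ => exact (le_ci_meet_iff hM (isConcept_denO hM _)).2 ⟨hS _ h₁, hS _ h₂⟩
  | orX_inv h₁ h₂ => exact (ci_join_le_iff hM (isConcept_denF hM _)).2 ⟨hS _ h₁, hS _ h₂⟩
  | adj_box_l h =>
      exact (cbdia_le_iff (isConcept_denO hM _) (isConcept_denF hM _)).2 (hS _ h)
  | adj_box_r h => rw [SatCon, denF_boxS]; exact hS _ h
  | adj_dia_l h => rw [SatCon, denO_diaS]; exact hS _ h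
  | adj_dia_r h =>
      exact (cdia_le_iff (isConcept_denO hM _) (isConcept_denF hM _)).1 (hS _ h)
  | icomp_box h =>
      have h' := hS _ h
      rwa [SatCon, denF_boxS] at h'
  | icomp_bbox h =>
      exact (cdia_le_iff (isConcept_denO hM _) (isConcept_denF hM _)).2 (hS _ h)
  | icomp_dia h =>
      have h' := hS _ h
      rwa [SatCon, denO_diaS] at h'
  | icomp_bdia h =>
      exact (cbdia_le_iff (isConcept_denO hM _) (isConcept_denF hM _)).1 (hS _ h)
  | app_x h => exact hS (.rI _ (.cls _)) h
  | app_a h => exact hS (.rI (.cls _) _) h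
  | extra hE => exact hE.elim

theorem satP_of_mem_compl (hM : M.Good) {A : Set Term} (hA : ABoxWF A) (hMA : M.SatAll A)
    {p : PTerm} (hp : (Term.pos p).Plain) (h : Term.pos p ∈ Compl noExt A) : M.SatP p := by
  have hclosed : RuleClosed noExt A {t | ∀ q, t = .pos q → M.SatCon q} := by
    refine ⟨fun t ht q hq => ?_, fun t hd q hq => ?_⟩
    · subst hq
      exact (satCon_iff_satP hM (hA _ ht)).2 (hMA _ ht)
    · subst hq
      refine satCon_of_deriv hM (fun q hq => ?_) hd
      exact hq q rfl
  exact (satCon_iff_satP hM hp).1 (compl_subset_of_ruleClosed hclosed h p rfl)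

end Model

section CanonicalModelSat
variable {A : Finset Term}
local notation "Ā" => Compl noExt (A : Set Term)

lemma canModel_oi_mem_ci_fst_iff {b : ObName} {C : Cpt} (hC : Occurs C ↑A) :
    (canModel A).oi b ∈ ((canModel A).ci C).1 ↔ Term.pos (.rI b (.cls C)) ∈ Ā := by
  rw [canModel_ci hC]
  exact canModel_I_iff

lemma canModel_fi_mem_ci_snd_iff {y : FtName} {C : Cpt} (hC : Occurs C ↑A) :
    (canModel A).fi y ∈ ((canModel A).ci C).2 ↔ Term.pos (.rI (.cls C) y) ∈ Ā := by
  rw [canModel_ci hC]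
  exact canModel_I_iff

lemma canModel_satP_iff {p : PTerm} (hp : ∀ C ∈ (Term.pos p).cpts, Occurs C ↑A) :
    (canModel A).SatP p ↔ Term.pos p ∈ Ā := by
  rcases p with ⟨b, y⟩ | ⟨b, y⟩ | ⟨y, b⟩ | ⟨b, C⟩ | ⟨y, C⟩
  · exact canModel_I_iff
  · exact canModel_Rb_iff
  · exact canModel_Rd_iff
  · have hC := hp C (mem_subs_self C)
    exact (canModel_oi_mem_ci_fst_iff hC).trans (rI_cls_mem_compl_iff hC)
  · have hC := hp C (mem_subs_self C)
    exact (canModel_fi_mem_ci_snd_iff hC).trans (rI_cls_left_mem_compl_iff hC)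

theorem canModel_satAll (hWF : ABoxWF ↑A) (hCons : Consistent ↑A) :
    (canModel A).SatAll ↑A := by
  obtain ⟨M, hM, hMA⟩ := hCons
  rintro (p | p) ht
  · exact (canModel_satP_iff fun C hC => ⟨_, ht, hC⟩).2 (mem_compl_of_mem ht)
  · intro hp
    have hcpts : (Term.pos p).cpts = (Term.neg p).cpts := by
      rcases p <;> rfl
    have hp' := (canModel_satP_iff fun C hC => ⟨_, ht, hcpts ▸ hC⟩).1 hp
    exact hMA _ ht (M.satP_of_mem_compl hM hWF hMA (hWF (.neg p) ht) hp')

end CanonicalModelSat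

def Cpt.boxRank : Cpt → ℕ
  | .atom _ => 0
  | .meet C₁ C₂ => max C₁.boxRank C₂.boxRank
  | .join C₁ C₂ => min C₁.boxRank C₂.boxRank
  | .box C => C.boxRank + 1
  | .dia _ => 0

def Cpt.diaRank : Cpt → ℕ
  | .atom _ => 0
  | .meet C₁ C₂ => min C₁.diaRank C₂.diaRank
  | .join C₁ C₂ => max C₁.diaRank C₂.diaRank
  | .box C => C.diaRank
  | .dia C => C.diaRank + 1

lemma Cpt.boxRank_le_bd (C : Cpt) : C.boxRank ≤ C.bd := by
  induction C <;> simp only [Cpt.boxRank, Cpt.bd] <;> omega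

lemma Cpt.diaRank_le_dd (C : Cpt) : C.diaRank ≤ C.dd := by
  induction C <;> simp only [Cpt.diaRank, Cpt.dd] <;> omega

def ObName.diaCount : ObName → ℕ
  | .base _ => 0
  | .cls C => C.diaRank
  | .dia b => b.diaCount + 1
  | .bdia b => b.diaCount

/-- How many more `◆` may be prefixed to `b`. -/
def ObName.boxBudget (A : Finset Term) : ObName → ℕ
  | .base _ => aboxBd A + 1
  | .cls C => C.boxRank
  | .dia _ => 0
  | .bdia b => b.boxBudget A - 1

def FtName.boxCount : FtName → ℕ
  | .base _ => 0
  | .cls C => C.boxRank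
  | .box y => y.boxCount + 1
  | .bbox y => y.boxCount

/-- How many `◇` an object related to `y` may carry. -/
def FtName.diaBudget (A : Finset Term) : FtName → ℕ
  | .base _ => aboxDd A + 1
  | .cls C => C.diaRank
  | .box y => y.diaBudget A
  | .bbox y => y.diaBudget A - 1

@[simp] lemma ObName.diaCount_diaS (b : ObName) : (ObName.diaS b).diaCount = b.diaCount + 1 := by
  cases b <;> rfl

@[simp] lemma ObName.boxBudget_diaS (A : Finset Term) (b : ObName) :
    (ObName.diaS b).boxBudget A = 0 := by
  cases b <;> rfl

@[simp] lemma FtName.boxCount_boxS (y : FtName) : (FtName.boxS y).boxCount = y.boxCount + 1 := by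
  cases y <;> rfl

@[simp] lemma FtName.diaBudget_boxS (A : Finset Term) (y : FtName) :
    (FtName.boxS y).diaBudget A = y.diaBudget A := by
  cases y <;> rfl

/-- Concepts `C` whose classifying object `a_C` may appear in the completion; the `◇`s come from
the identification `◇a_C = a_{◇C}`. -/
inductive Cpt.ObAdmissible (A : Finset Term) : Cpt → Prop
  | occurs {C} : Occurs C ↑A → Cpt.ObAdmissible A C
  | dia {C} : Cpt.ObAdmissible A C → C.diaRank + 1 ≤ aboxDd A + 1 → Cpt.ObAdmissible A (.dia C)

inductive Cpt.FtAdmissible (A : Finset Term) : Cpt → Prop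
  | occurs {C} : Occurs C ↑A → Cpt.FtAdmissible A C
  | box {C} : Cpt.FtAdmissible A C → C.boxRank + 1 ≤ aboxBd A + 1 → Cpt.FtAdmissible A (.box C)

inductive ObName.Admissible (A : Finset Term) : ObName → Prop
  | base {n} : ObOccurs (.base n) ↑A → ObName.Admissible A (.base n)
  | cls {C} : C.ObAdmissible A → ObName.Admissible A (.cls C)
  | dia {b} : ObName.Admissible A b → b.diaCount + 1 ≤ aboxDd A + 1 → ObName.Admissible A (.dia b)
  | bdia {b} : ObName.Admissible A b → 1 ≤ b.boxBudget A → ObName.Admissible A (.bdia b)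

inductive FtName.Admissible (A : Finset Term) : FtName → Prop
  | base {n} : FtOccurs (.base n) ↑A → FtName.Admissible A (.base n)
  | cls {C} : C.FtAdmissible A → FtName.Admissible A (.cls C)
  | box {y} : FtName.Admissible A y → y.boxCount + 1 ≤ aboxBd A + 1 → FtName.Admissible A (.box y)
  | bbox {y} : FtName.Admissible A y → y.boxCount = 0 → 1 ≤ y.diaBudget A →
      FtName.Admissible A (.bbox y)

section Admissible
variable {A : Finset Term} {C : Cpt} {b : ObName} {y : FtName}

lemma mem_aboxCpts_iff : C ∈ aboxCpts A ↔ Occurs C ↑A := by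
  simp [aboxCpts, Occurs]

lemma Occurs.boxRank_le (h : Occurs C ↑A) : C.boxRank ≤ aboxBd A :=
  C.boxRank_le_bd.trans (Finset.le_sup (mem_aboxCpts_iff.2 h))

lemma Occurs.diaRank_le (h : Occurs C ↑A) : C.diaRank ≤ aboxDd A :=
  C.diaRank_le_dd.trans (Finset.le_sup (mem_aboxCpts_iff.2 h))

lemma Cpt.ObAdmissible.diaRank_le (h : C.ObAdmissible A) : C.diaRank ≤ aboxDd A + 1 := by
  induction h with
  | occurs h => exact h.diaRank_le.trans (Nat.le_succ _)
  | dia _ hle => exact hle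

lemma Cpt.ObAdmissible.boxRank_le (h : C.ObAdmissible A) : C.boxRank ≤ aboxBd A + 1 := by
  induction h with
  | occurs h => exact h.boxRank_le.trans (Nat.le_succ _)
  | dia => exact Nat.zero_le _

lemma Cpt.FtAdmissible.boxRank_le (h : C.FtAdmissible A) : C.boxRank ≤ aboxBd A + 1 := by
  induction h with
  | occurs h => exact h.boxRank_le.trans (Nat.le_succ _)
  | box _ hle => exact hle

lemma Cpt.FtAdmissible.diaRank_le (h : C.FtAdmissible A) : C.diaRank ≤ aboxDd A + 1 := by
  induction h with
  | occurs h => exact h.diaRank_le.trans (Nat.le_succ _)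
  | box _ _ ih => exact ih

lemma ObName.Admissible.diaCount_le (h : b.Admissible A) : b.diaCount ≤ aboxDd A + 1 := by
  induction h with
  | base => exact Nat.zero_le _
  | cls hC => exact hC.diaRank_le
  | dia _ hle => exact hle
  | bdia _ _ ih => exact ih

lemma ObName.Admissible.boxBudget_le (h : b.Admissible A) : b.boxBudget A ≤ aboxBd A + 1 := by
  induction h with
  | base => exact le_rfl
  | cls hC => exact hC.boxRank_le
  | dia => exact Nat.zero_le _
  | bdia _ _ ih => exact (Nat.sub_le _ _).trans ih

lemma FtName.Admissible.boxCount_le (h : y.Admissible A) : y.boxCount ≤ aboxBd A + 1 := by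
  induction h with
  | base => exact Nat.zero_le _
  | cls hC => exact hC.boxRank_le
  | box _ hle => exact hle
  | bbox _ _ _ ih => exact ih

lemma FtName.Admissible.diaBudget_le (h : y.Admissible A) : y.diaBudget A ≤ aboxDd A + 1 := by
  induction h with
  | base => exact le_rfl
  | cls hC => exact hC.diaRank_le
  | box _ _ ih => exact ih
  | bbox _ _ _ ih => exact (Nat.sub_le _ _).trans ih

lemma ObName.Admissible.diaS (h : b.Admissible A) (hb : b.diaCount + 1 ≤ aboxDd A + 1) :
    (ObName.diaS b).Admissible A := by
  cases h with
  | cls hC => exact .cls (.dia hC hb)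
  | base h => exact .dia (.base h) hb
  | dia h hle => exact .dia (.dia h hle) hb
  | bdia h hle => exact .dia (.bdia h hle) hb

lemma FtName.Admissible.boxS (h : y.Admissible A) (hy : y.boxCount + 1 ≤ aboxBd A + 1) :
    (FtName.boxS y).Admissible A := by
  cases h with
  | cls hC => exact .cls (.box hC hy)
  | base h => exact .box (.base h) hy
  | box h hle => exact .box (.box h hle) hy
  | bbox h h₀ h₁ => exact .box (.bbox h h₀ h₁) hy

lemma ObName.Admissible.of_diaS (h : (ObName.diaS b).Admissible A) : b.Admissible A := by
  cases b with
  | cls C =>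
      rcases h with _ | (⟨h⟩ | ⟨hC, _⟩)
      · exact .cls (.occurs h.of_dia)
      · exact .cls hC
  | base => cases h with | dia h _ => exact h
  | dia => cases h with | dia h _ => exact h
  | bdia => cases h with | dia h _ => exact h

lemma FtName.Admissible.of_boxS (h : (FtName.boxS y).Admissible A) : y.Admissible A := by
  cases y with
  | cls C =>
      rcases h with _ | (⟨h⟩ | ⟨hC, _⟩)
      · exact .cls (.occurs h.of_box)
      · exact .cls hC
  | base => cases h with | box h _ => exact h
  | box => cases h with | box h _ => exact h
  | bbox => cases h with | box h _ => exact h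

end Admissible

/-- The invariant of the completion that bounds the shapes of its names. -/
def Term.Admissible (A : Finset Term) : Term → Prop
  | .pos (.rI b y) => b.Admissible A ∧ y.Admissible A ∧
      b.diaCount ≤ y.diaBudget A ∧ y.boxCount ≤ b.boxBudget A
  | .pos (.rbox b y) => b.Admissible A ∧ y.Admissible A ∧
      b.diaCount ≤ y.diaBudget A ∧ y.boxCount + 1 ≤ b.boxBudget A
  | .pos (.rdia y b) => b.Admissible A ∧ y.Admissible A ∧
      b.diaCount + 1 ≤ y.diaBudget A ∧ y.boxCount = 0
  | .pos (.mem b C) => b.Admissible A ∧ b.diaCount ≤ C.diaRank ∧ C.boxRank ≤ b.boxBudget A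
  | .pos (.fmem y C) => y.Admissible A ∧ C.diaRank ≤ y.diaBudget A ∧ y.boxCount ≤ C.boxRank
  | .neg (.rI b y) | .neg (.rbox b y) | .neg (.rdia y b) => b.Admissible A ∧ y.Admissible A
  | .neg (.mem b C) => b.Admissible A ∧ Occurs C ↑A
  | .neg (.fmem y C) => y.Admissible A ∧ Occurs C ↑A

section Admissible
variable {A : Finset Term} {S : Set Term} {t : Term}

lemma Term.admissible_of_mem (hWF : ABoxWF ↑A) (ht : t ∈ A) : t.Admissible A := by
  have hobj : ∀ b ∈ t.objs,
      b.Admissible A ∧ b.diaCount = 0 ∧ b.boxBudget A = aboxBd A + 1 := fun b hb => by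
    obtain ⟨n, rfl⟩ := (hWF t ht).1 b hb
    exact ⟨.base ⟨t, ht, hb⟩, rfl, rfl⟩
  have hfeat : ∀ y ∈ t.feats,
      y.Admissible A ∧ y.boxCount = 0 ∧ y.diaBudget A = aboxDd A + 1 := fun y hy => by
    obtain ⟨n, rfl⟩ := (hWF t ht).2 y hy
    exact ⟨.base ⟨t, ht, hy⟩, rfl, rfl⟩
  have hC : ∀ C ∈ t.cpts, Occurs C ↑A := fun C hC => ⟨t, ht, hC⟩
  rcases t with (⟨b, y⟩ | ⟨b, y⟩ | ⟨y, b⟩ | ⟨b, C⟩ | ⟨y, C⟩) |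
    (⟨b, y⟩ | ⟨b, y⟩ | ⟨y, b⟩ | ⟨b, C⟩ | ⟨y, C⟩)
  all_goals
    try obtain ⟨hb, hb₀, hb₁⟩ := hobj b (List.mem_singleton_self b)
    try obtain ⟨hy, hy₀, hy₁⟩ := hfeat y (List.mem_singleton_self y)
  · exact ⟨hb, hy, by omega, by omega⟩
  · exact ⟨hb, hy, by omega, by omega⟩
  · exact ⟨hb, hy, by omega, by omega⟩
  · exact ⟨hb, by omega, by have := (hC C (mem_subs_self C)).boxRank_le; omega⟩
  · exact ⟨hy, by have := (hC C (mem_subs_self C)).diaRank_le; omega, by omega⟩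
  all_goals
    first | exact ⟨hb, hy⟩ | exact ⟨hb, hC C (mem_subs_self C)⟩ | exact ⟨hy, hC C (mem_subs_self C)⟩

section Adjunction
variable {b : ObName} {y : FtName}

lemma admissible_rbox_iff_boxS :
    (Term.pos (.rbox b y)).Admissible A ↔ (Term.pos (.rI b (FtName.boxS y))).Admissible A := by
  constructor
  · rintro ⟨hb, hy, h₁, h₂⟩
    exact ⟨hb, hy.boxS (by have := hb.boxBudget_le; omega), by simpa using h₁, by simpa using h₂⟩
  · rintro ⟨hb, hy, h₁, h₂⟩
    exact ⟨hb, hy.of_boxS, by simpa using h₁, by simpa using h₂⟩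

lemma admissible_rbox_iff_bdia :
    (Term.pos (.rbox b y)).Admissible A ↔ (Term.pos (.rI (.bdia b) y)).Admissible A := by
  constructor
  · rintro ⟨hb, hy, h₁, h₂⟩
    exact ⟨.bdia hb (by omega), hy, h₁, by simp only [ObName.boxBudget]; omega⟩
  · rintro ⟨⟨⟩ | ⟨⟩ | ⟨⟩ | ⟨hb, h₀⟩, hy, h₁, h₂⟩
    exact ⟨hb, hy, h₁, by simp only [ObName.boxBudget] at h₂; omega⟩

lemma admissible_rdia_iff_diaS :
    (Term.pos (.rdia y b)).Admissible A ↔ (Term.pos (.rI (ObName.diaS b) y)).Admissible A := by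
  constructor
  · rintro ⟨hb, hy, h₁, h₂⟩
    exact ⟨hb.diaS (by have := hy.diaBudget_le; omega), hy, by simpa using h₁, by simp [h₂]⟩
  · rintro ⟨hb, hy, h₁, h₂⟩
    exact ⟨hb.of_diaS, hy, by simpa using h₁, by simpa using h₂⟩

lemma admissible_rdia_iff_bbox :
    (Term.pos (.rdia y b)).Admissible A ↔ (Term.pos (.rI b (.bbox y))).Admissible A := by
  constructor
  · rintro ⟨hb, hy, h₁, h₂⟩
    exact ⟨hb, .bbox hy h₂ (by omega), by simp only [FtName.diaBudget]; omega,
      by simp only [FtName.boxCount]; omega⟩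
  · rintro ⟨hb, ⟨⟩ | ⟨⟩ | ⟨⟩ | ⟨hy, h₀, h₀'⟩, h₁, h₂⟩
    exact ⟨hb, hy, by simp only [FtName.diaBudget] at h₁; omega, h₀⟩

end Adjunction

lemma Term.Admissible.of_deriv (hS : ∀ t ∈ S, t.Admissible A) (hd : Deriv noExt ↑A S t) :
    t.Admissible A := by
  cases hd with
  | create_a hC | create_x hC => exact ⟨.cls (.occurs hC), le_rfl, le_rfl⟩
  | basic h₁ h₂ =>
      obtain ⟨hb, hd₁, hh₁⟩ := hS _ h₁
      obtain ⟨hy, hd₂, hh₂⟩ := hS _ h₂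
      exact ⟨hb, hy, hd₁.trans hd₂, hh₂.trans hh₁⟩
  | andA_l h | andA_r h | orX_l h | orX_r h =>
      obtain ⟨hn, h₁, h₂⟩ := hS _ h
      simp only [Cpt.diaRank, Cpt.boxRank] at h₁ h₂
      exact ⟨hn, by omega, by omega⟩
  | andA_inv h₁ h₂ | orX_inv h₁ h₂ =>
      obtain ⟨hn, h₁, h₁'⟩ := hS _ h₁
      obtain ⟨-, h₂, h₂'⟩ := hS _ h₂
      exact ⟨hn, by simp only [Cpt.diaRank]; omega, by simp only [Cpt.boxRank]; omega⟩
  | boxR h₁ h₂ =>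
      obtain ⟨hb, hd₁, hh₁⟩ := hS _ h₁
      obtain ⟨hy, hd₂, hh₂⟩ := hS _ h₂
      exact ⟨hb, hy, hd₁.trans hd₂, by simp only [Cpt.boxRank] at hh₁; omega⟩
  | diaR h₁ h₂ =>
      obtain ⟨hy, hd₁, hh₁⟩ := hS _ h₁
      obtain ⟨hb, hd₂, hh₂⟩ := hS _ h₂
      exact ⟨hb, hy, by simp only [Cpt.diaRank] at hd₁; omega, by simpa [Cpt.boxRank] using hh₁⟩
  | adj_box_l h => exact admissible_rbox_iff_bdia.1 (hS _ h)
  | adj_box_r h => exact admissible_rbox_iff_boxS.1 (hS _ h)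
  | adj_dia_l h => exact admissible_rdia_iff_diaS.1 (hS _ h)
  | adj_dia_r h => exact admissible_rdia_iff_bbox.1 (hS _ h)
  | icomp_box h => exact admissible_rbox_iff_boxS.2 (hS _ h)
  | icomp_bbox h => exact admissible_rdia_iff_bbox.2 (hS _ h)
  | icomp_dia h => exact admissible_rdia_iff_diaS.2 (hS _ h)
  | icomp_bdia h => exact admissible_rbox_iff_bdia.2 (hS _ h)
  | neg_b h => exact ⟨(hS _ h).1, .cls (.occurs (hS _ h).2)⟩
  | neg_x h => exact ⟨.cls (.occurs (hS _ h).2), (hS _ h).1⟩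
  | app_x h | app_a h =>
      obtain ⟨hb, hy, h₁, h₂⟩ := hS _ h
      first | exact ⟨hb, h₁, h₂⟩ | exact ⟨hy, h₁, h₂⟩
  | extra hE => exact hE.elim

theorem Term.admissible_of_mem_compl (hWF : ABoxWF ↑A) (ht : t ∈ Compl noExt ↑A) :
    t.Admissible A :=
  compl_subset_of_ruleClosed (S := {t | t.Admissible A})
    ⟨fun _ ht => Term.admissible_of_mem hWF ht,
      fun _ hd => Term.Admissible.of_deriv (fun _ h => h) hd⟩ ht

lemma Term.Admissible.obName {b : ObName} (h : t.Admissible A) (hb : b ∈ t.objs) :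
    b.Admissible A := by
  rcases t with (_ | _ | _ | _ | _) | (_ | _ | _ | _ | _) <;>
    simp only [Term.objs, PTerm.objs, List.mem_cons, List.not_mem_nil, or_false] at hb <;>
    subst hb <;> exact h.1

lemma Term.Admissible.ftName {y : FtName} (h : t.Admissible A) (hy : y ∈ t.feats) :
    y.Admissible A := by
  rcases t with (_ | _ | _ | _ | _) | (_ | _ | _ | _ | _) <;>
    simp only [Term.feats, PTerm.feats, List.mem_cons, List.not_mem_nil, or_false] at hy <;>
    subst hy <;> first | exact h.1 | exact h.2.1 | exact h.2

end Admissible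

section Counting
variable {A : Finset Term} {C : Cpt} {b : ObName} {y : FtName}

def obCpts (A : Finset Term) : Finset Cpt :=
  (Finset.range (aboxDd A + 2) ×ˢ aboxCpts A).image fun p => Cpt.dia^[p.1] p.2

def ftCpts (A : Finset Term) : Finset Cpt :=
  (Finset.range (aboxBd A + 2) ×ˢ aboxCpts A).image fun p => Cpt.box^[p.1] p.2

lemma Cpt.ObAdmissible.exists_eq_dia_iterate (h : C.ObAdmissible A) :
    ∃ i C₀, C = Cpt.dia^[i] C₀ ∧ C₀ ∈ aboxCpts A ∧ i ≤ C.diaRank := by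
  induction h with
  | occurs h => exact ⟨0, _, rfl, mem_aboxCpts_iff.2 h, Nat.zero_le _⟩
  | dia _ _ ih =>
      obtain ⟨i, C₀, rfl, hC₀, hi⟩ := ih
      exact ⟨i + 1, C₀, (Function.iterate_succ_apply' _ _ _).symm, hC₀,
        by simp only [Cpt.diaRank]; omega⟩

lemma Cpt.FtAdmissible.exists_eq_box_iterate (h : C.FtAdmissible A) :
    ∃ i C₀, C = Cpt.box^[i] C₀ ∧ C₀ ∈ aboxCpts A ∧ i ≤ C.boxRank := by
  induction h with
  | occurs h => exact ⟨0, _, rfl, mem_aboxCpts_iff.2 h, Nat.zero_le _⟩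
  | box _ _ ih =>
      obtain ⟨i, C₀, rfl, hC₀, hi⟩ := ih
      exact ⟨i + 1, C₀, (Function.iterate_succ_apply' _ _ _).symm, hC₀,
        by simp only [Cpt.boxRank]; omega⟩

lemma Cpt.ObAdmissible.mem_obCpts (h : C.ObAdmissible A) : C ∈ obCpts A := by
  obtain ⟨i, C₀, rfl, hC₀, hi⟩ := h.exists_eq_dia_iterate
  have := h.diaRank_le
  exact Finset.mem_image.2 ⟨(i, C₀), Finset.mem_product.2 ⟨Finset.mem_range.2 (by omega), hC₀⟩, rfl⟩

lemma Cpt.FtAdmissible.mem_ftCpts (h : C.FtAdmissible A) : C ∈ ftCpts A := by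
  obtain ⟨i, C₀, rfl, hC₀, hi⟩ := h.exists_eq_box_iterate
  have := h.boxRank_le
  exact Finset.mem_image.2 ⟨(i, C₀), Finset.mem_product.2 ⟨Finset.mem_range.2 (by omega), hC₀⟩, rfl⟩

def obRoots (A : Finset Term) : Finset ObName :=
  A.biUnion (fun t => t.objs.toFinset) ∪ (obCpts A).image ObName.cls

def ftRoots (A : Finset Term) : Finset FtName :=
  A.biUnion (fun t => t.feats.toFinset) ∪ (ftCpts A).image FtName.cls

/-- Admissible object names are of the form `◇ⁱ ◆ʲ r`: a `◆` is never applied above a `◇`,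
since `◇b` has no box budget left. -/
lemma ObName.Admissible.exists_eq_iterate (h : b.Admissible A) :
    ∃ i j r, b = ObName.dia^[i] (ObName.bdia^[j] r) ∧ r ∈ obRoots A ∧
      i ≤ b.diaCount ∧ j + b.boxBudget A ≤ aboxBd A + 1 := by
  induction h with
  | base h =>
      obtain ⟨t, ht, hb⟩ := h
      refine ⟨0, 0, _, rfl, Finset.mem_union_left _ ?_, le_rfl, (zero_add _).le⟩
      exact Finset.mem_biUnion.2 ⟨t, ht, List.mem_toFinset.2 hb⟩
  | cls hC =>
      exact ⟨0, 0, _, rfl, Finset.mem_union_right _ (Finset.mem_image_of_mem _ hC.mem_obCpts),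
        Nat.zero_le _, by simpa [ObName.boxBudget] using hC.boxRank_le⟩
  | dia _ _ ih =>
      obtain ⟨i, j, r, rfl, hr, hi, hj⟩ := ih
      exact ⟨i + 1, j, r, (Function.iterate_succ_apply' _ _ _).symm, hr,
        by simp only [ObName.diaCount]; omega, by simp only [ObName.boxBudget]; omega⟩
  | bdia _ h₁ ih =>
      obtain ⟨i, j, r, rfl, hr, hi, hj⟩ := ih
      rcases i with _ | i
      · exact ⟨0, j + 1, r, (Function.iterate_succ_apply' ObName.bdia j r).symm, hr, Nat.zero_le _,
          by simp only [ObName.boxBudget, Function.iterate_zero, id] at h₁ hj ⊢; omega⟩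
      · simp [Function.iterate_succ_apply', ObName.boxBudget] at h₁

lemma FtName.Admissible.exists_eq_iterate (h : y.Admissible A) :
    ∃ i j r, y = FtName.box^[i] (FtName.bbox^[j] r) ∧ r ∈ ftRoots A ∧
      i ≤ y.boxCount ∧ j + y.diaBudget A ≤ aboxDd A + 1 := by
  induction h with
  | base h =>
      obtain ⟨t, ht, hy⟩ := h
      refine ⟨0, 0, _, rfl, Finset.mem_union_left _ ?_, le_rfl, (zero_add _).le⟩
      exact Finset.mem_biUnion.2 ⟨t, ht, List.mem_toFinset.2 hy⟩
  | cls hC =>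
      exact ⟨0, 0, _, rfl, Finset.mem_union_right _ (Finset.mem_image_of_mem _ hC.mem_ftCpts),
        Nat.zero_le _, by simpa [FtName.diaBudget] using hC.diaRank_le⟩
  | box _ _ ih =>
      obtain ⟨i, j, r, rfl, hr, hi, hj⟩ := ih
      exact ⟨i + 1, j, r, (Function.iterate_succ_apply' _ _ _).symm, hr,
        by simp only [FtName.boxCount]; omega, by simp only [FtName.diaBudget]; omega⟩
  | bbox _ h₀ h₁ ih =>
      obtain ⟨i, j, r, rfl, hr, hi, hj⟩ := ih
      rcases i with _ | i
      · exact ⟨0, j + 1, r, (Function.iterate_succ_apply' FtName.bbox j r).symm, hr, Nat.zero_le _,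
          by simp only [FtName.diaBudget, Function.iterate_zero, id] at h₁ hj ⊢; omega⟩
      · simp [Function.iterate_succ_apply', FtName.boxCount] at h₀

def obNames (A : Finset Term) : Finset ObName :=
  (Finset.range (aboxDd A + 2) ×ˢ Finset.range (aboxBd A + 2) ×ˢ obRoots A).image
    fun p => ObName.dia^[p.1] (ObName.bdia^[p.2.1] p.2.2)

def ftNames (A : Finset Term) : Finset FtName :=
  (Finset.range (aboxBd A + 2) ×ˢ Finset.range (aboxDd A + 2) ×ˢ ftRoots A).image
    fun p => FtName.box^[p.1] (FtName.bbox^[p.2.1] p.2.2)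

lemma ObName.Admissible.mem_obNames (h : b.Admissible A) : b ∈ obNames A := by
  obtain ⟨i, j, r, rfl, hr, hi, hj⟩ := h.exists_eq_iterate
  have := h.diaCount_le
  refine Finset.mem_image.2 ⟨(i, j, r), ?_, rfl⟩
  simp only [Finset.mem_product, Finset.mem_range]
  exact ⟨by omega, by omega, hr⟩

lemma FtName.Admissible.mem_ftNames (h : y.Admissible A) : y ∈ ftNames A := by
  obtain ⟨i, j, r, rfl, hr, hi, hj⟩ := h.exists_eq_iterate
  have := h.boxCount_le
  refine Finset.mem_image.2 ⟨(i, j, r), ?_, rfl⟩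
  simp only [Finset.mem_product, Finset.mem_range]
  exact ⟨by omega, by omega, hr⟩

lemma Term.length_objs_le_one (t : Term) : t.objs.length ≤ 1 := by
  rcases t with p | p <;> cases p <;> simp [Term.objs, PTerm.objs]

lemma Term.length_feats_le_one (t : Term) : t.feats.length ≤ 1 := by
  rcases t with p | p <;> cases p <;> simp [Term.feats, PTerm.feats]

lemma Term.tsize_pos (t : Term) : 0 < t.tsize := by
  rcases t with p | p <;> simp [Term.tsize]

lemma Cpt.card_subs_le (C : Cpt) : C.subs.card ≤ C.csize := by
  induction C with
  | atom => simp [Cpt.subs, Cpt.csize]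
  | meet C₁ C₂ ih₁ ih₂ | join C₁ C₂ ih₁ ih₂ =>
      have := Finset.card_union_le C₁.subs C₂.subs
      exact (Finset.card_insert_le _ _).trans (by simp only [Cpt.csize]; omega)
  | box C ih | dia C ih => exact (Finset.card_insert_le _ _).trans (by simp only [Cpt.csize]; omega)

lemma Cpt.bd_le_csize (C : Cpt) : C.bd ≤ C.csize := by
  induction C <;> simp only [Cpt.bd, Cpt.csize] <;> omega

lemma Cpt.dd_le_csize (C : Cpt) : C.dd ≤ C.csize := by
  induction C <;> simp only [Cpt.dd, Cpt.csize] <;> omega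

lemma Cpt.csize_le_of_mem_subs {C D : Cpt} (h : C ∈ D.subs) : C.csize ≤ D.csize := by
  induction D <;>
    simp only [Cpt.subs, Finset.mem_insert, Finset.mem_union, Finset.mem_singleton] at h <;>
    rcases h with rfl | h <;> grind [Cpt.csize]

lemma Term.csize_le_of_mem_cpts {t : Term} (h : C ∈ t.cpts) : C.csize ≤ t.tsize := by
  rcases t with (_ | _ | _ | ⟨_, D⟩ | ⟨_, D⟩) | (_ | _ | _ | ⟨_, D⟩ | ⟨_, D⟩) <;>
    simp only [Term.cpts, Finset.notMem_empty] at h <;>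
    simp only [Term.tsize, PTerm.psize] <;> grind [Cpt.csize_le_of_mem_subs h]

lemma Term.card_cpts_le (t : Term) : t.cpts.card ≤ t.tsize := by
  rcases t with (_ | _ | _ | ⟨_, D⟩ | ⟨_, D⟩) | (_ | _ | _ | ⟨_, D⟩ | ⟨_, D⟩) <;>
    simp only [Term.cpts, Term.tsize, PTerm.psize, Finset.card_empty] <;>
    first | omega | exact (Cpt.card_subs_le _).trans (by omega)

lemma le_aboxSize_of_mem {t : Term} (ht : t ∈ A) : t.tsize ≤ aboxSize A :=
  Finset.single_le_sum (fun _ _ => Nat.zero_le _) ht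

lemma aboxBd_le_aboxSize : aboxBd A ≤ aboxSize A := Finset.sup_le fun C hC => by
  obtain ⟨t, ht, hCt⟩ := Finset.mem_biUnion.1 hC
  exact C.bd_le_csize.trans ((Term.csize_le_of_mem_cpts hCt).trans (le_aboxSize_of_mem ht))

lemma aboxDd_le_aboxSize : aboxDd A ≤ aboxSize A := Finset.sup_le fun C hC => by
  obtain ⟨t, ht, hCt⟩ := Finset.mem_biUnion.1 hC
  exact C.dd_le_csize.trans ((Term.csize_le_of_mem_cpts hCt).trans (le_aboxSize_of_mem ht))

lemma card_aboxCpts_le : (aboxCpts A).card ≤ aboxSize A :=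
  Finset.card_biUnion_le.trans (Finset.sum_le_sum fun t _ => t.card_cpts_le)

lemma card_biUnion_toFinset_le (f : Term → List α) (hf : ∀ t, (f t).length ≤ 1) [DecidableEq α] :
    (A.biUnion fun t => (f t).toFinset).card ≤ aboxSize A :=
  Finset.card_biUnion_le.trans <| Finset.sum_le_sum fun t _ =>
    (List.toFinset_card_le _).trans ((hf t).trans t.tsize_pos)

lemma card_obNames_le : (obNames A).card ≤ (aboxSize A + 2) ^ 4 := by
  have hroots : (obRoots A).card ≤ aboxSize A + (aboxDd A + 2) * aboxSize A := by
    refine (Finset.card_union_le _ _).trans (add_le_add ?_ ?_)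
    · exact card_biUnion_toFinset_le _ Term.length_objs_le_one
    · refine Finset.card_image_le.trans (Finset.card_image_le.trans ?_)
      rw [Finset.card_product, Finset.card_range]
      exact Nat.mul_le_mul_left _ card_aboxCpts_le
  refine Finset.card_image_le.trans ?_
  rw [Finset.card_product, Finset.card_product, Finset.card_range, Finset.card_range]
  have := aboxBd_le_aboxSize (A := A)
  have := aboxDd_le_aboxSize (A := A)
  calc (aboxDd A + 2) * ((aboxBd A + 2) * (obRoots A).card)
      ≤ (aboxSize A + 2) * ((aboxSize A + 2) * (aboxSize A + (aboxSize A + 2) * aboxSize A)) := by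
        refine Nat.mul_le_mul (by omega) (Nat.mul_le_mul (by omega) (hroots.trans ?_))
        gcongr
    _ ≤ (aboxSize A + 2) ^ 4 := by ring_nf; nlinarith

lemma card_ftNames_le : (ftNames A).card ≤ (aboxSize A + 2) ^ 4 := by
  have hroots : (ftRoots A).card ≤ aboxSize A + (aboxBd A + 2) * aboxSize A := by
    refine (Finset.card_union_le _ _).trans (add_le_add ?_ ?_)
    · exact card_biUnion_toFinset_le _ Term.length_feats_le_one
    · refine Finset.card_image_le.trans (Finset.card_image_le.trans ?_)
      rw [Finset.card_product, Finset.card_range]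
      exact Nat.mul_le_mul_left _ card_aboxCpts_le
  refine Finset.card_image_le.trans ?_
  rw [Finset.card_product, Finset.card_product, Finset.card_range, Finset.card_range]
  have := aboxBd_le_aboxSize (A := A)
  have := aboxDd_le_aboxSize (A := A)
  calc (aboxBd A + 2) * ((aboxDd A + 2) * (ftRoots A).card)
      ≤ (aboxSize A + 2) * ((aboxSize A + 2) * (aboxSize A + (aboxSize A + 2) * aboxSize A)) := by
        refine Nat.mul_le_mul (by omega) (Nat.mul_le_mul (by omega) (hroots.trans ?_))
        gcongr
    _ ≤ (aboxSize A + 2) ^ 4 := by ring_nf; nlinarith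

end Counting

lemma card_option_subtype_le {α : Type*} {P : α → Prop} {s : Finset α} (h : ∀ a, P a → a ∈ s) :
    Nat.card (Option {a // P a}) ≤ s.card + 1 := by
  have hinj : Function.Injective fun a : {a // P a} => (⟨a.1, h _ a.2⟩ : s) :=
    fun a b hab => Subtype.ext (congrArg Subtype.val hab :)
  have : Finite {a // P a} := Finite.of_injective _ hinj
  rw [Finite.card_option, ← Nat.card_eq_finsetCard]
  exact Nat.add_le_add_right (Nat.card_le_card_of_injective _ hinj) 1

theorem card_canModel_le {A : Finset Term} (hWF : ABoxWF ↑A) :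
    Nat.card (canModel A).Ob + Nat.card (canModel A).Ft ≤ 34 * (aboxSize A + 1) ^ 4 := by
  have hOb : Nat.card (canModel A).Ob ≤ (obNames A).card + 1 :=
    card_option_subtype_le fun b ⟨t, ht, hb⟩ =>
      ((Term.admissible_of_mem_compl hWF ht).obName hb).mem_obNames
  have hFt : Nat.card (canModel A).Ft ≤ (ftNames A).card + 1 :=
    card_option_subtype_le fun y ⟨t, ht, hy⟩ =>
      ((Term.admissible_of_mem_compl hWF ht).ftName hy).mem_ftNames
  have h₁ := card_obNames_le (A := A)
  have h₂ := card_ftNames_le (A := A)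
  have h₃ : (aboxSize A + 2) ^ 4 ≤ 2 ^ 4 * (aboxSize A + 1) ^ 4 := by
    rw [← mul_pow]
    exact Nat.pow_le_pow_left (by omega) 4
  have h₄ := Nat.one_le_pow 4 (aboxSize A + 1) (Nat.succ_pos _)
  omega

/-- For any consistent LE-ALC ABox `A`, the canonical model
`M` constructed from the tableaux completion `Ā` is a model of `A` whose size
is polynomial in the size of `A`; moreover, for any individual names `b`, `y`
and any concept `C` occurring in `A`: `b` is in the extent of `C^M` iff
`b I x_C ∈ Ā`, and `y` is in the intent of `C^M` iff `a_C I y ∈ Ā`. -/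
theorem canonical_model_universal :
    ∃ c k : ℕ, ∀ A : Finset Term, ABoxWF ↑A → Consistent ↑A →
      (canModel A).Good ∧ (canModel A).SatAll ↑A ∧
      Nat.card (canModel A).Ob + Nat.card (canModel A).Ft ≤
        c * (aboxSize A + 1) ^ k ∧
      (∀ (b : ObName) (C : Cpt), ObOccurs b (Compl noExt ↑A) → Occurs C ↑A →
        ((canModel A).oi b ∈ (Model.ci (canModel A) C).1 ↔
          Term.pos (.rI b (.cls C)) ∈ Compl noExt ↑A)) ∧
      (∀ (y : FtName) (C : Cpt), FtOccurs y (Compl noExt ↑A) → Occurs C ↑A →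
        ((canModel A).fi y ∈ (Model.ci (canModel A) C).2 ↔
          Term.pos (.rI (.cls C) y) ∈ Compl noExt ↑A)) :=
  ⟨34, 4, fun _ hWF hCons =>
    ⟨canModel_good, canModel_satAll hWF hCons, card_canModel_le hWF,
      fun _ _ _ hC => canModel_oi_mem_ci_fst_iff hC,
      fun _ _ _ hC => canModel_fi_mem_ci_snd_iff hC⟩⟩

end LEALC
end

section
/- Let t₁ and t₂ be any LE-ALC ABox terms not containing negation. Then, for any consistent LE-ALC ABox A, A ⊨ t₁ ∨ t₂ if and only if A ⊨ t₁ or A ⊨ t₂ (where ∨ denotes disjunction in the first-order metalanguage). -/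
/-!
Common formal infrastructure for the description logic LE-ALC:
syntax of concepts, individual names, ABox terms, the tableaux expansion
rules and completion, and the polarity-based (enriched formal context)
semantics.
-/

namespace LEALC

/-!
If `A ⊭ t₁` and `A ⊭ t₂`, take countermodels `M₁` and `M₂`. Adjoining to each a top object and
a top feature, related to everything, changes the truth of no term but makes every extent and
intent nonempty. For such models the polars of a product of sets are the products of the polars,
so the product model interprets every concept componentwise: it satisfies a positive term iff
both factors do. Hence it is a model of `A` refuting both `t₁` and `t₂`.
-/

section Polars

variable {O₁ F₁ O₂ F₂ : Type}

def prodRel (I₁ : O₁ → F₁ → Prop) (I₂ : O₂ → F₂ → Prop) : O₁ × O₂ → F₁ × F₂ → Prop :=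
  fun a x => I₁ a.1 x.1 ∧ I₂ a.2 x.2

lemma gup_prodRel (I₁ : O₁ → F₁ → Prop) (I₂ : O₂ → F₂ → Prop) {B₁ : Set O₁} {B₂ : Set O₂}
    (h₁ : B₁.Nonempty) (h₂ : B₂.Nonempty) :
    gup (prodRel I₁ I₂) (B₁ ×ˢ B₂) = gup I₁ B₁ ×ˢ gup I₂ B₂ := by
  obtain ⟨a₁, ha₁⟩ := h₁
  obtain ⟨a₂, ha₂⟩ := h₂
  ext ⟨x₁, x₂⟩
  constructor
  · intro h
    exact ⟨fun b hb => (h (b, a₂) ⟨hb, ha₂⟩).1, fun b hb => (h (a₁, b) ⟨ha₁, hb⟩).2⟩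
  · rintro ⟨hx₁, hx₂⟩ ⟨b₁, b₂⟩ ⟨hb₁, hb₂⟩
    exact ⟨hx₁ b₁ hb₁, hx₂ b₂ hb₂⟩

lemma gdn_prodRel (I₁ : O₁ → F₁ → Prop) (I₂ : O₂ → F₂ → Prop) {Y₁ : Set F₁} {Y₂ : Set F₂}
    (h₁ : Y₁.Nonempty) (h₂ : Y₂.Nonempty) :
    gdn (prodRel I₁ I₂) (Y₁ ×ˢ Y₂) = gdn I₁ Y₁ ×ˢ gdn I₂ Y₂ :=
  gup_prodRel (flip I₁) (flip I₂) h₁ h₂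

lemma stableO_prod {I₁ : O₁ → F₁ → Prop} {I₂ : O₂ → F₂ → Prop} {B₁ : Set O₁} {B₂ : Set O₂}
    (s₁ : StableO I₁ B₁) (s₂ : StableO I₂ B₂) (h₁ : B₁.Nonempty) (h₂ : B₂.Nonempty)
    (g₁ : (gup I₁ B₁).Nonempty) (g₂ : (gup I₂ B₂).Nonempty) :
    StableO (prodRel I₁ I₂) (B₁ ×ˢ B₂) := by
  rw [StableO, gup_prodRel _ _ h₁ h₂, gdn_prodRel _ _ g₁ g₂, s₁, s₂]

lemma stableF_prod {I₁ : O₁ → F₁ → Prop} {I₂ : O₂ → F₂ → Prop} {Y₁ : Set F₁} {Y₂ : Set F₂}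
    (s₁ : StableF I₁ Y₁) (s₂ : StableF I₂ Y₂) (h₁ : Y₁.Nonempty) (h₂ : Y₂.Nonempty)
    (g₁ : (gdn I₁ Y₁).Nonempty) (g₂ : (gdn I₂ Y₂).Nonempty) :
    StableF (prodRel I₁ I₂) (Y₁ ×ˢ Y₂) :=
  stableO_prod (I₁ := flip I₁) (I₂ := flip I₂) s₁ s₂ h₁ h₂ g₁ g₂

end Polars

section Padding

variable {X Y O F : Type}

def padRel (R : X → Y → Prop) : Option X → Option Y → Prop
  | some a, some b => R a b
  | _, _ => True

def padSet (B : Set X) : Set (Option X) := insert none (some '' B)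

@[simp] lemma padRel_some_some {R : X → Y → Prop} {a : X} {b : Y} :
    padRel R (some a) (some b) ↔ R a b := Iff.rfl

@[simp] lemma padRel_none_left (R : X → Y → Prop) (q : Option Y) : padRel R none q := trivial

@[simp] lemma padRel_none_right (R : X → Y → Prop) (p : Option X) : padRel R p none := by
  cases p <;> trivial

lemma padRel_flip (R : X → Y → Prop) :
    (fun q p => padRel R p q) = padRel (fun q p => R p q) := by
  funext q p
  cases p <;> cases q <;> rfl

@[simp] lemma none_mem_padSet (B : Set X) : none ∈ padSet B := Set.mem_insert _ _

@[simp] lemma some_mem_padSet {B : Set X} {a : X} : some a ∈ padSet B ↔ a ∈ B := by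
  simp [padSet]

lemma padSet_inter (B B' : Set X) : padSet B ∩ padSet B' = padSet (B ∩ B') := by
  ext (_ | _) <;> simp

lemma gup_padRel (I : O → F → Prop) (B : Set O) :
    gup (padRel I) (padSet B) = padSet (gup I B) := by
  ext (_ | _) <;> simp [gup, padSet]

lemma gdn_padRel (I : O → F → Prop) (Y : Set F) :
    gdn (padRel I) (padSet Y) = padSet (gdn I Y) := by
  ext (_ | _) <;> simp [gdn, padSet]

lemma stableO_padSet {I : O → F → Prop} {B : Set O} (h : StableO I B) :
    StableO (padRel I) (padSet B) := by
  rw [StableO, gup_padRel, gdn_padRel, h]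

lemma stableO_univ (I : O → F → Prop) : StableO I Set.univ :=
  Set.eq_univ_of_forall fun _ _ hx => hx _ trivial

lemma stableO_padRel_fiber {I : O → F → Prop} {R : O → Y → Prop}
    (h : ∀ y, StableO I {a | R a y}) : ∀ y, StableO (padRel I) {o | padRel R o y}
  | none => by simpa using stableO_univ (padRel I)
  | some y => by
      convert stableO_padSet (h y) using 1
      ext (_ | _) <;> simp

end Padding

namespace Model

def prod (M₁ M₂ : Model) : Model where
  Ob := M₁.Ob × M₂.Ob
  Ft := M₁.Ft × M₂.Ft
  I := prodRel M₁.I M₂.I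
  Rb := prodRel M₁.Rb M₂.Rb
  Rd := prodRel M₁.Rd M₂.Rd
  oi b := (M₁.oi b, M₂.oi b)
  fi y := (M₁.fi y, M₂.fi y)
  vA n := M₁.vA n ×ˢ M₂.vA n

def HasTops (M : Model) : Prop :=
  (∃ ω : M.Ob, (∀ x, M.I ω x) ∧ (∀ x, M.Rb ω x) ∧ (∀ x, M.Rd x ω) ∧ ∀ n, ω ∈ M.vA n) ∧
  (∃ χ : M.Ft, (∀ a, M.I a χ) ∧ (∀ a, M.Rb a χ) ∧ (∀ a, M.Rd χ a))

lemma top_mem_ci {M : Model} {ω : M.Ob} {χ : M.Ft} (hωI : ∀ x, M.I ω x)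
    (hωb : ∀ x, M.Rb ω x) (hωv : ∀ n, ω ∈ M.vA n) (hχI : ∀ a, M.I a χ)
    (hχd : ∀ a, M.Rd χ a) : ∀ C, ω ∈ (M.ci C).1 ∧ χ ∈ (M.ci C).2
  | .atom n => ⟨hωv n, fun a _ => hχI a⟩
  | .meet C₁ C₂ =>
      ⟨⟨(top_mem_ci hωI hωb hωv hχI hχd C₁).1, (top_mem_ci hωI hωb hωv hχI hχd C₂).1⟩,
        fun a _ => hχI a⟩
  | .join C₁ C₂ =>
      ⟨fun x _ => hωI x,
        ⟨(top_mem_ci hωI hωb hωv hχI hχd C₁).2, (top_mem_ci hωI hωb hωv hχI hχd C₂).2⟩⟩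
  | .box _ => ⟨fun x _ => hωb x, fun a _ => hχI a⟩
  | .dia _ => ⟨fun x _ => hωI x, fun a _ => hχd a⟩

variable {M₁ M₂ : Model}

lemma ci_prod (h₁ : M₁.HasTops) (h₂ : M₂.HasTops) (C : Cpt) :
    (M₁.prod M₂).ci C = ((M₁.ci C).1 ×ˢ (M₂.ci C).1, (M₁.ci C).2 ×ˢ (M₂.ci C).2) := by
  obtain ⟨⟨ω₁, hωI₁, hωb₁, -, hωv₁⟩, ⟨χ₁, hχI₁, -, hχd₁⟩⟩ := h₁
  obtain ⟨⟨ω₂, hωI₂, hωb₂, -, hωv₂⟩, ⟨χ₂, hχI₂, -, hχd₂⟩⟩ := h₂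
  have top₁ := top_mem_ci hωI₁ hωb₁ hωv₁ hχI₁ hχd₁
  have top₂ := top_mem_ci hωI₂ hωb₂ hωv₂ hχI₂ hχd₂
  induction C with
  | atom n => exact Prod.ext rfl (gup_prodRel M₁.I M₂.I ⟨ω₁, hωv₁ n⟩ ⟨ω₂, hωv₂ n⟩)
  | meet C₁ C₂ ih₁ ih₂ =>
      simp only [ci, ih₁, ih₂]
      exact Prod.ext Set.prod_inter_prod <| (congrArg (gup _) Set.prod_inter_prod).trans <|
        gup_prodRel M₁.I M₂.I ⟨ω₁, (top₁ C₁).1, (top₁ C₂).1⟩ ⟨ω₂, (top₂ C₁).1, (top₂ C₂).1⟩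
  | join C₁ C₂ ih₁ ih₂ =>
      simp only [ci, ih₁, ih₂]
      exact Prod.ext ((congrArg (gdn _) Set.prod_inter_prod).trans <|
        gdn_prodRel M₁.I M₂.I ⟨χ₁, (top₁ C₁).2, (top₁ C₂).2⟩ ⟨χ₂, (top₂ C₁).2, (top₂ C₂).2⟩)
        Set.prod_inter_prod
  | box C ih =>
      have hbox := gdn_prodRel M₁.Rb M₂.Rb ⟨χ₁, (top₁ C).2⟩ ⟨χ₂, (top₂ C).2⟩
      simp only [ci, ih]
      exact Prod.ext hbox <| (congrArg (gup _) hbox).trans <|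
        gup_prodRel M₁.I M₂.I ⟨ω₁, fun x _ => hωb₁ x⟩ ⟨ω₂, fun x _ => hωb₂ x⟩
  | dia C ih =>
      have hdia := gup_prodRel (fun a x => M₁.Rd x a) (fun a x => M₂.Rd x a)
        ⟨ω₁, (top₁ C).1⟩ ⟨ω₂, (top₂ C).1⟩
      simp only [ci, ih]
      exact Prod.ext ((congrArg (gdn _) hdia).trans <|
        gdn_prodRel M₁.I M₂.I ⟨χ₁, fun a _ => hχd₁ a⟩ ⟨χ₂, fun a _ => hχd₂ a⟩) hdia

lemma satP_prod (h₁ : M₁.HasTops) (h₂ : M₂.HasTops) (β : PTerm) :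
    (M₁.prod M₂).SatP β ↔ M₁.SatP β ∧ M₂.SatP β := by
  cases β <;> simp only [SatP, ci_prod h₁ h₂] <;> rfl

lemma good_prod (g₁ : M₁.Good) (g₂ : M₂.Good) (h₁ : M₁.HasTops) (h₂ : M₂.HasTops) :
    (M₁.prod M₂).Good := by
  obtain ⟨⟨ω₁, hωI₁, hωb₁, hωd₁, hωv₁⟩, ⟨χ₁, hχI₁, hχb₁, hχd₁⟩⟩ := h₁
  obtain ⟨⟨ω₂, hωI₂, hωb₂, hωd₂, hωv₂⟩, ⟨χ₂, hχI₂, hχb₂, hχd₂⟩⟩ := h₂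
  obtain ⟨gb₁, gb₁', gd₁, gd₁', gv₁⟩ := g₁
  obtain ⟨gb₂, gb₂', gd₂, gd₂', gv₂⟩ := g₂
  refine ⟨fun x => ?_, fun a => ?_, fun a => ?_, fun x => ?_, fun n => ?_⟩
  · exact stableO_prod (gb₁ x.1) (gb₂ x.2) ⟨ω₁, hωb₁ x.1⟩ ⟨ω₂, hωb₂ x.2⟩
      ⟨χ₁, fun a _ => hχI₁ a⟩ ⟨χ₂, fun a _ => hχI₂ a⟩
  · exact stableF_prod (gb₁' a.1) (gb₂' a.2) ⟨χ₁, hχb₁ a.1⟩ ⟨χ₂, hχb₂ a.2⟩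
      ⟨ω₁, fun x _ => hωI₁ x⟩ ⟨ω₂, fun x _ => hωI₂ x⟩
  · exact stableF_prod (gd₁ a.1) (gd₂ a.2) ⟨χ₁, hχd₁ a.1⟩ ⟨χ₂, hχd₂ a.2⟩
      ⟨ω₁, fun x _ => hωI₁ x⟩ ⟨ω₂, fun x _ => hωI₂ x⟩
  · exact stableO_prod (gd₁' x.1) (gd₂' x.2) ⟨ω₁, hωd₁ x.1⟩ ⟨ω₂, hωd₂ x.2⟩
      ⟨χ₁, fun a _ => hχI₁ a⟩ ⟨χ₂, fun a _ => hχI₂ a⟩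
  · exact stableO_prod (gv₁ n) (gv₂ n) ⟨ω₁, hωv₁ n⟩ ⟨ω₂, hωv₂ n⟩
      ⟨χ₁, fun a _ => hχI₁ a⟩ ⟨χ₂, fun a _ => hχI₂ a⟩

lemma satAll_prod {S : Set Term} (h₁ : M₁.HasTops) (h₂ : M₂.HasTops) (s₁ : M₁.SatAll S)
    (s₂ : M₂.SatAll S) : (M₁.prod M₂).SatAll S := by
  rintro (β | β) hβ
  · exact (satP_prod h₁ h₂ β).2 ⟨s₁ _ hβ, s₂ _ hβ⟩
  · exact fun h => s₁ _ hβ ((satP_prod h₁ h₂ β).1 h).1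

def pad (M : Model) : Model where
  Ob := Option M.Ob
  Ft := Option M.Ft
  I := padRel M.I
  Rb := padRel M.Rb
  Rd := padRel M.Rd
  oi b := some (M.oi b)
  fi y := some (M.fi y)
  vA n := padSet (M.vA n)

lemma hasTops_pad (M : Model) : M.pad.HasTops :=
  ⟨⟨none, padRel_none_left M.I, padRel_none_left M.Rb, fun x => padRel_none_right M.Rd x,
      fun _ => none_mem_padSet _⟩,
    ⟨none, fun a => padRel_none_right M.I a, fun a => padRel_none_right M.Rb a,
      padRel_none_left M.Rd⟩⟩

lemma good_pad {M : Model} (g : M.Good) : M.pad.Good := by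
  obtain ⟨gb, gb', gd, gd', gv⟩ := g
  refine ⟨stableO_padRel_fiber gb, fun a => ?_, fun a => ?_, fun x => ?_,
    fun n => stableO_padSet (gv n)⟩
  -- `StableF I` is `StableO` of the transposed relation
  · have h := stableO_padRel_fiber (I := fun x a => M.I a x) (R := fun x a => M.Rb a x) gb' a
    rw [← padRel_flip M.I, ← padRel_flip M.Rb] at h
    exact h
  · have h := stableO_padRel_fiber (I := fun x a => M.I a x) (R := M.Rd) gd a
    rw [← padRel_flip M.I] at h
    exact h
  · have h := stableO_padRel_fiber (I := M.I) (R := fun a x => M.Rd x a) gd' x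
    rw [← padRel_flip M.Rd] at h
    exact h

lemma ci_pad (M : Model) (C : Cpt) :
    M.pad.ci C = (padSet (M.ci C).1, padSet (M.ci C).2) := by
  induction C with
  | atom n => exact Prod.ext rfl (gup_padRel _ _)
  | meet C₁ C₂ ih₁ ih₂ =>
      simp only [ci, ih₁, ih₂]
      exact Prod.ext (padSet_inter _ _) <|
        (congrArg (gup _) (padSet_inter _ _)).trans (gup_padRel _ _)
  | join C₁ C₂ ih₁ ih₂ =>
      simp only [ci, ih₁, ih₂]
      exact Prod.ext ((congrArg (gdn _) (padSet_inter _ _)).trans (gdn_padRel _ _))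
        (padSet_inter _ _)
  | box C ih =>
      simp only [ci, ih]
      exact Prod.ext (gdn_padRel _ _) <| (congrArg (gup _) (gdn_padRel _ _)).trans (gup_padRel _ _)
  | dia C ih =>
      have hdia : gup (fun a x => padRel M.Rd x a) (padSet (M.ci C).1) =
          padSet (gup (fun a x => M.Rd x a) (M.ci C).1) := by
        rw [padRel_flip, gup_padRel]
      simp only [ci, ih]
      exact Prod.ext ((congrArg (gdn _) hdia).trans (gdn_padRel _ _)) hdia

lemma satP_pad (M : Model) (β : PTerm) : M.pad.SatP β ↔ M.SatP β := by
  cases β with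
  | mem b C => exact (congrArg (some (M.oi b) ∈ ·.1) (ci_pad M C)).to_iff.trans some_mem_padSet
  | fmem y C => exact (congrArg (some (M.fi y) ∈ ·.2) (ci_pad M C)).to_iff.trans some_mem_padSet
  | _ => rfl

lemma satAll_pad {M : Model} {S : Set Term} (s : M.SatAll S) : M.pad.SatAll S := by
  rintro (β | β) hβ
  · exact (satP_pad M β).2 (s _ hβ)
  · exact fun h => s _ hβ ((satP_pad M β).1 h)

lemma exists_good_satAll_satP_iff_and {S : Set Term} (g₁ : M₁.Good) (g₂ : M₂.Good)
    (s₁ : M₁.SatAll S) (s₂ : M₂.SatAll S) :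
    ∃ M : Model, M.Good ∧ M.SatAll S ∧ ∀ β, M.SatP β ↔ M₁.SatP β ∧ M₂.SatP β := by
  have h₁ := hasTops_pad M₁
  have h₂ := hasTops_pad M₂
  refine ⟨M₁.pad.prod M₂.pad, good_prod (good_pad g₁) (good_pad g₂) h₁ h₂,
    satAll_prod h₁ h₂ (satAll_pad s₁) (satAll_pad s₂), fun β => ?_⟩
  rw [satP_prod h₁ h₂, satP_pad, satP_pad]

end Model

theorem disjunctive_queries_general (A : Finset Term) (t₁ t₂ : PTerm) :
    (∀ M : Model, M.Good → M.SatAll ↑A → (M.SatP t₁ ∨ M.SatP t₂)) ↔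
      (Entails ↑A (.pos t₁) ∨ Entails ↑A (.pos t₂)) := by
  refine ⟨fun h => ?_, ?_⟩
  · by_contra! hc
    simp only [Entails, not_forall] at hc
    obtain ⟨⟨M₁, g₁, s₁, n₁⟩, M₂, g₂, s₂, n₂⟩ := hc
    obtain ⟨M, g, s, hM⟩ := Model.exists_good_satAll_satP_iff_and g₁ g₂ s₁ s₂
    rcases h M g s with h | h
    exacts [n₁ ((hM t₁).1 h).1, n₂ ((hM t₂).1 h).2]
  · rintro (h | h) M g s
    exacts [Or.inl (h M g s), Or.inr (h M g s)]

/-- Let `t₁` and `t₂` be any LE-ALC ABox terms not containing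
negation. Then, for any consistent LE-ALC ABox `A`, `A ⊨ t₁ ∨ t₂` if and only
if `A ⊨ t₁` or `A ⊨ t₂` (where `∨` is disjunction in the metalanguage). -/
theorem disjunctive_queries (A : Finset Term) (hwf : ABoxWF ↑A)
    (hcon : Consistent ↑A) (t₁ t₂ : PTerm) :
    (∀ M : Model, M.Good → M.SatAll ↑A → (M.SatP t₁ ∨ M.SatP t₂)) ↔
      (Entails ↑A (.pos t₁) ∨ Entails ↑A (.pos t₂)) :=
  disjunctive_queries_general A t₁ t₂

end LEALC
end
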